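/- arXiv:1212.4329 — 7 statements merged into one kernel-verified Lean document; each statement's English description precedes it below -/
import Mathlib

section
/- Every function f : ℂ → ℂ is the algebraic sum of two perfectly everywhere surjective functions: there exist g₁, g₂ ∈ PES(ℂ) with f = g₁ + g₂ (pointwise). -/
/-!
A nonempty perfect subset of `ℂ` has `𝔠` points, while there are only `𝔠` triples
`(P, z, b)` of a nonempty perfect set `P`, a value `z ∈ ℂ` and a bit `b`. So a transfinite
recursion of length `𝔠` picks pairwise distinct points `x (P, z, b) ∈ P`. Put
`g₁ (x (P, z, true)) = z`, `g₁ (x (P, z, false)) = f (x (P, z, false)) - z` and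
`g₂ = f - g₁`: then `g₁` takes the value `z` on `P` at the first point and `g₂` at the second.
-/

/-- `f ∈ PES(ℂ)`: `f` maps every nonempty perfect subset of `ℂ` onto `ℂ`. -/
def PES : Set (ℂ → ℂ) :=
  {f | ∀ P : Set ℂ, Perfect P → P.Nonempty → f '' P = Set.univ}

open Cardinal Set Function TopologicalSpace

namespace Cardinal

universe u

theorem exists_injective_forall_mem_of_mk_Iio_lt {ι α : Type u} [LinearOrder ι]
    [WellFoundedLT ι] {A : ι → Set α} (h : ∀ i, #(Iio i) < #(A i)) :
    ∃ x : ι → α, Injective x ∧ ∀ i, x i ∈ A i := by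
  have avoid : ∀ i (prev : Iio i → α), (A i \ range prev).Nonempty := fun i prev =>
    sdiff_nonempty.2 fun hsub => (h i).not_ge ((mk_le_mk_of_subset hsub).trans mk_range_le)
  let x : ι → α := wellFounded_lt.fix fun i rec => (avoid i fun j => rec j j.2).some
  have hx : ∀ i, x i ∈ A i \ range fun j : Iio i => x j := fun i => by
    rw [show x i = _ from wellFounded_lt.fix_eq _ i]
    exact Nonempty.some_mem _
  refine ⟨x, .of_lt_imp_ne fun i j hij hx_eq => ?_, fun i => (hx i).1⟩
  exact (hx j).2 ⟨⟨i, hij⟩, hx_eq⟩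

theorem exists_injective_forall_mem_of_mk_le {ι α : Type u} {A : ι → Set α}
    (h : ∀ i, #ι ≤ #(A i)) : ∃ x : ι → α, Injective x ∧ ∀ i, x i ∈ A i := by
  obtain ⟨e⟩ : Nonempty ((#ι).ord.ToType ≃ ι) := Cardinal.eq.1 (mk_ord_toType _)
  obtain ⟨x, hx_inj, hx_mem⟩ := exists_injective_forall_mem_of_mk_Iio_lt
    (A := A ∘ e) fun t => (mk_ord_toType #ι ▸ mk_Iio_lt t (by simp)).trans_le (h (e t))
  exact ⟨x ∘ e.symm, hx_inj.comp e.symm.injective, fun i => by simpa using hx_mem (e.symm i)⟩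

end Cardinal

theorem Perfect.continuum_le_mk {α : Type*} [MetricSpace α] [CompleteSpace α] {C : Set α}
    (hC : Perfect C) (hne : C.Nonempty) : 𝔠 ≤ #C := by
  obtain ⟨f, hf_range, -, hf_inj⟩ := hC.exists_nat_bool_injection hne
  simpa using lift_mk_le_lift_mk_of_injective
    (hf_inj.codRestrict (range_subset_iff.1 hf_range))

theorem mk_isClosed_le_continuum (X : Type*) [TopologicalSpace X] [SecondCountableTopology X] :
    #{C : Set X // IsClosed C} ≤ 𝔠 := by
  obtain ⟨b, hb_countable, -, hb⟩ := exists_countable_basis X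
  have : Countable b := hb_countable.to_subtype
  have hinj : Injective fun C : {C : Set X // IsClosed C} =>
      {V : b | (V : Set X) ⊆ (C : Set X)ᶜ} := by
    rintro ⟨C, hC⟩ ⟨C', hC'⟩ h
    have hcompl : Cᶜ = C'ᶜ := by
      rw [hb.open_eq_sUnion' hC.isOpen_compl, hb.open_eq_sUnion' hC'.isOpen_compl]
      congr 1
      ext s
      exact and_congr_right fun hs => Set.ext_iff.1 h ⟨s, hs⟩
    exact Subtype.ext (compl_injective hcompl)
  calc #{C : Set X // IsClosed C} ≤ #(Set b) := mk_le_of_injective hinj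
    _ = 2 ^ #b := mk_set
    _ ≤ 2 ^ ℵ₀ := power_le_power_left two_ne_zero mk_le_aleph0
    _ = 𝔠 := two_power_aleph0

theorem exists_injective_forall_mem_perfect :
    ∃ x : {P : Set ℂ // Perfect P ∧ P.Nonempty} × ℂ × Bool → ℂ,
      Injective x ∧ ∀ k, x k ∈ (k.1 : Set ℂ) := by
  refine exists_injective_forall_mem_of_mk_le fun k =>
    le_trans ?_ (k.1.2.1.continuum_le_mk k.1.2.2)
  have h_perfect : #{P : Set ℂ // Perfect P ∧ P.Nonempty} ≤ 𝔠 :=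
    (mk_subtype_mono fun P hP => hP.1.closed).trans (mk_isClosed_le_continuum ℂ)
  have h_bool : #Bool ≤ 𝔠 := mk_le_aleph0.trans aleph0_le_continuum
  simp only [mk_prod, lift_id]
  calc _ ≤ 𝔠 * (𝔠 * 𝔠) := mul_le_mul' h_perfect (mul_le_mul' mk_complex.le h_bool)
    _ = 𝔠 := by rw [mul_eq_self aleph0_le_continuum, mul_eq_self aleph0_le_continuum]

/-- Every function `f : ℂ → ℂ` is the (pointwise) sum of two perfectly
everywhere surjective functions. -/
theorem stmt4 (f : ℂ → ℂ) : ∃ g₁ g₂ : ℂ → ℂ, g₁ ∈ PES ∧ g₂ ∈ PES ∧ f = g₁ + g₂ := by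
  obtain ⟨x, hx_inj, hx_mem⟩ := exists_injective_forall_mem_perfect
  set g := extend x (fun k => if k.2.2 then k.2.1 else f (x k) - k.2.1) 0
  have hg : ∀ k, g (x k) = if k.2.2 then k.2.1 else f (x k) - k.2.1 :=
    hx_inj.extend_apply _ _
  refine ⟨g, f - g, fun P hP hne => ?_, fun P hP hne => ?_, (add_sub_cancel g f).symm⟩
  · refine eq_univ_of_forall fun z => ⟨_, hx_mem (⟨P, hP, hne⟩, z, true), ?_⟩
    simp [hg]
  · refine eq_univ_of_forall fun z => ⟨_, hx_mem (⟨P, hP, hne⟩, z, false), ?_⟩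
    simp [hg]
end

section
/- The set SES(ℂ) \ PES(ℂ) of all strongly everywhere surjective functions from ℂ to ℂ that are not perfectly everywhere surjective is strongly 2^𝔠-algebrable in the algebra ℂ^ℂ, where 𝔠 is the cardinality of the continuum. -/
open Cardinal

/-- A subset `E` of a commutative `K`-algebra `A` is strongly `lam`-algebrable: `E ∪ {0}`
contains a free commutative `K`-algebra with `lam` free generators; concretely, there is an
injective family of `lam` elements of `E` such that every nonzero polynomial over `K` without
constant term, evaluated at distinct members of the family, is nonzero and belongs to `E`. -/
def StronglyAlgebrable (K : Type) {A : Type} [CommRing K] [CommRing A] [Algebra K A]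
    (E : Set A) (lam : Cardinal) : Prop :=
  ∃ (ι : Type) (x : ι → A), #ι = lam ∧ Function.Injective x ∧
    (∀ i, x i ∈ E) ∧
    ∀ n : ℕ, 0 < n → ∀ P : MvPolynomial (Fin n) K, P ≠ 0 →
      MvPolynomial.constantCoeff P = 0 →
      ∀ ξ : Fin n → ι, Function.Injective ξ →
        MvPolynomial.aeval (fun i => x (ξ i)) P ≠ 0 ∧
        MvPolynomial.aeval (fun i => x (ξ i)) P ∈ E

/-- `f ∈ SES(ℂ)`: on every nonempty open subset of `ℂ`, `f` takes every complex value
`𝔠` many times. -/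
def SES : Set (ℂ → ℂ) :=
  {f | ∀ U : Set ℂ, IsOpen U → U.Nonempty → ∀ z : ℂ,
    #{x : ℂ | x ∈ U ∧ f x = z} = Cardinal.continuum}


/-!
Every code (a finite probe set `F ⊆ ℂ` and a table of values indexed by the subsets of `F`) is
attached to a dense set of real numbers, built from cosets of `ℚ` in `ℝ`. The function `f_S`
vanishes on the real axis and, at a non-real point, returns the table entry of `F ∩ S` for the
code of its real part. Distinct sets `S₁, …, Sₙ` are separated by a finite `F`, so for any targets
`w` some code makes `f_{Sᵢ} = wᵢ` simultaneously on 𝔠 points of every nonempty open set.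
A nonconstant polynomial over `ℂ` is surjective (Nullstellensatz), hence `P(f_{S₁}, …, f_{Sₙ})`
is strongly everywhere surjective; on the perfect set `ℝ` it is constantly `P(0) = 0`.
-/

open MvPolynomial Set Function

theorem MvPolynomial.exists_eval_eq {k σ : Type*} [Field k] [IsAlgClosed k] [Finite σ]
    {P : MvPolynomial σ k} (hP : P.totalDegree ≠ 0) (z : k) : ∃ w : σ → k, eval w P = z := by
  by_contra! h
  have hlocus : zeroLocus k (Ideal.span {P - C z}) = ∅ := by
    simp [zeroLocus_span, sub_eq_zero, h]
  have htop : Ideal.span {P - C z} = ⊤ := by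
    rw [← Ideal.radical_eq_top, ← vanishingIdeal_zeroLocus_eq_radical (K := k), hlocus,
      vanishingIdeal_empty]
  obtain ⟨r, -, hr⟩ := isUnit_iff_eq_C_of_isReduced.mp (Ideal.span_singleton_eq_top.mp htop)
  rw [sub_eq_iff_eq_add, ← C_add] at hr
  exact hP (hr ▸ totalDegree_C _)

theorem MvPolynomial.aeval_pi_apply {ι X R A : Type*} [CommSemiring R] [CommSemiring A]
    [Algebra R A] (f : ι → X → A) (P : MvPolynomial ι R) (x : X) :
    aeval f P x = aeval (fun i => f i x) P :=
  DFunLike.congr_fun (comp_aeval (f := f) (Pi.evalAlgHom R (fun _ => A) x)) P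

theorem exists_dense_fibers {α : Type} [Nonempty α] (hα : #α ≤ 𝔠) :
    ∃ c : ℝ → α, ∀ a, Dense (c ⁻¹' {a}) := by
  let H : AddSubgroup ℝ := (Rat.castHom ℝ).toAddMonoidHom.range
  have hquot : 𝔠 ≤ #(ℝ ⧸ H) := by
    by_contra! hlt
    have hH : #H < 𝔠 := (mk_range_le.trans mkRat.le).trans_lt aleph0_lt_continuum
    have := mk_congr (AddSubgroup.addGroupEquivQuotientProdAddSubgroup (s := H))
    rw [mk_prod, lift_id, lift_id, mk_real] at this
    exact (mul_lt_of_lt aleph0_le_continuum hlt hH).ne this.symm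
  obtain ⟨e⟩ := (le_def _ _).mp (hα.trans hquot)
  refine ⟨invFun e ∘ QuotientAddGroup.mk, fun a => ?_⟩
  obtain ⟨x, hx⟩ := QuotientAddGroup.mk_surjective (e a)
  have hdense : DenseRange fun r : ℚ => x + r :=
    (Homeomorph.addLeft x).surjective.denseRange.comp Rat.denseRange_cast (continuous_const_add x)
  refine hdense.mono ?_
  rintro _ ⟨r, rfl⟩
  have : (QuotientAddGroup.mk (x + r) : ℝ ⧸ H) = e a := by
    rw [← hx, QuotientAddGroup.eq]
    simp [H]
  simp [this, leftInverse_invFun e.injective a]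

theorem mk_finset_prod_finsupp_complex : #(Finset ℂ × (Finset ℂ →₀ ℂ)) = 𝔠 := by
  simp [mk_finset_of_infinite]

noncomputable def code : ℝ → Finset ℂ × (Finset ℂ →₀ ℂ) :=
  (exists_dense_fibers mk_finset_prod_finsupp_complex.le).choose

theorem dense_code_preimage (a : Finset ℂ × (Finset ℂ →₀ ℂ)) : Dense (code ⁻¹' {a}) :=
  (exists_dense_fibers mk_finset_prod_finsupp_complex.le).choose_spec a

open Classical in
noncomputable def codedFun (S : Set ℂ) (x : ℂ) : ℂ :=
  if x.im = 0 then 0 else (code x.re).2 ((code x.re).1.filter (· ∈ S))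

theorem exists_finset_separating {α ι : Type*} [Finite ι] {S : ι → Set α} (hS : Injective S) :
    ∃ F : Finset α, ∀ i j, i ≠ j → ∃ a ∈ F, ¬(a ∈ S i ↔ a ∈ S j) := by
  choose t ht using fun p : {p : ι × ι // p.1 ≠ p.2} => symmDiff_nonempty.mpr (hS.ne p.2)
  refine ⟨(finite_range t).toFinset, fun i j hij => ⟨t ⟨(i, j), hij⟩, by simp, ?_⟩⟩
  have := ht ⟨(i, j), hij⟩
  simp only [Set.mem_symmDiff] at this
  tauto

theorem continuum_le_mk_re_mem_of_dense {D : Set ℝ} (hD : Dense D) {U : Set ℂ} (hU : IsOpen U)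
    (hne : U.Nonempty) : 𝔠 ≤ #{x : ℂ | x ∈ U ∧ x.re ∈ D ∧ x.im ≠ 0} := by
  obtain ⟨z, hz⟩ := hne
  obtain ⟨s, hsU, hsD⟩ := hD.inter_open_nonempty {s : ℝ | (s + z.im * Complex.I : ℂ) ∈ U}
    (hU.preimage (by fun_prop)) ⟨z.re, by simpa [Complex.re_add_im] using hz⟩
  let line : ℝ → ℂ := fun y => s + y * Complex.I
  have hline : Injective line := fun y y' h => by simpa [line] using congrArg Complex.im h
  have hopen : IsOpen (line ⁻¹' U) := hU.preimage (by fun_prop)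
  have hV : (line ⁻¹' U ∩ {0}ᶜ).Nonempty :=
    (dense_compl_singleton 0).inter_open_nonempty _ hopen ⟨z.im, hsU⟩
  calc 𝔠 ≤ #(line ⁻¹' U ∩ {0}ᶜ : Set ℝ) :=
        continuum_le_cardinal_of_isOpen ℝ (hopen.inter isOpen_compl_singleton) hV
    _ = #(line '' (line ⁻¹' U ∩ {0}ᶜ)) := (mk_image_eq hline).symm
    _ ≤ _ := mk_le_mk_of_subset ?_
  rintro _ ⟨y, ⟨hyU, hy0⟩, rfl⟩
  exact ⟨hyU, by simpa [line] using hsD, by simpa [line] using hy0⟩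

theorem continuum_le_mk_codedFun_eq {ι : Type*} [Finite ι] {S : ι → Set ℂ} (hS : Injective S)
    (w : ι → ℂ) {U : Set ℂ} (hU : IsOpen U) (hne : U.Nonempty) :
    𝔠 ≤ #{x : ℂ | x ∈ U ∧ ∀ i, codedFun (S i) x = w i} := by
  classical
  obtain ⟨F, hF⟩ := exists_finset_separating hS
  let trace : ι → Finset ℂ := fun i => F.filter (· ∈ S i)
  have htrace : Injective trace := by
    intro i j h
    by_contra hij
    obtain ⟨a, haF, ha⟩ := hF i j hij
    have := Finset.ext_iff.mp h a
    simp only [trace, Finset.mem_filter, haF, true_and] at this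
    exact ha this
  let v : Finset ℂ →₀ ℂ := Finsupp.onFinset (finite_range trace).toFinset (extend trace w 0)
    fun A hA => by
      by_contra hA'
      exact hA (extend_apply' _ _ _ (by simpa using hA'))
  refine (continuum_le_mk_re_mem_of_dense (dense_code_preimage (F, v)) hU hne).trans
    (mk_le_mk_of_subset ?_)
  rintro x ⟨hxU, hxcode, hxim⟩
  refine ⟨hxU, fun i => ?_⟩
  simp only [Set.mem_preimage, Set.mem_singleton_iff] at hxcode
  simp [codedFun, hxim, hxcode, v, trace, htrace.extend_apply]

theorem ne_zero_of_mem_SES {f : ℂ → ℂ} (hf : f ∈ SES) : f ≠ 0 := by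
  rintro rfl
  exact continuum_ne_zero (by simpa using (hf univ isOpen_univ univ_nonempty 1).symm)

theorem perfect_setOf_im_eq_zero : Perfect {z : ℂ | z.im = 0} := by
  refine ⟨isClosed_eq Complex.continuous_im continuous_const, ?_⟩
  refine IsPreconnected.preperfect_of_nontrivial ⟨0, rfl, 1, rfl, zero_ne_one⟩ ?_
  exact (convex_hyperplane Complex.imLm.isLinear 0).isPreconnected

theorem notMem_PES_of_eq_zero_on_real {f : ℂ → ℂ} (hf : ∀ x : ℂ, x.im = 0 → f x = 0) :
    f ∉ PES := fun hPES => by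
  obtain ⟨x, hx, hfx⟩ : (1 : ℂ) ∈ f '' {z : ℂ | z.im = 0} := by
    rw [hPES _ perfect_setOf_im_eq_zero ⟨0, rfl⟩]; trivial
  exact one_ne_zero (hfx.symm.trans (hf x hx))

theorem aeval_codedFun_mem_SES {ι : Type*} [Finite ι] {S : ι → Set ℂ} (hS : Injective S)
    {P : MvPolynomial ι ℂ} (hP : P.totalDegree ≠ 0) : aeval (fun i => codedFun (S i)) P ∈ SES := by
  intro U hU hne z
  refine le_antisymm (mk_complex ▸ mk_set_le _) ?_
  obtain ⟨w, hw⟩ := exists_eval_eq hP z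
  refine (continuum_le_mk_codedFun_eq hS w hU hne).trans (mk_le_mk_of_subset ?_)
  rintro x ⟨hxU, hx⟩
  refine ⟨hxU, ?_⟩
  rw [aeval_pi_apply, funext hx]
  exact hw

theorem aeval_codedFun_notMem_PES {ι : Type*} (S : ι → Set ℂ) {P : MvPolynomial ι ℂ}
    (h0 : constantCoeff P = 0) : aeval (fun i => codedFun (S i)) P ∉ PES := by
  refine notMem_PES_of_eq_zero_on_real fun x hx => ?_
  have : (fun i => codedFun (S i) x) = 0 := funext fun i => if_pos hx
  simp [aeval_pi_apply, this, h0]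

theorem aeval_codedFun_mem_SES_diff_PES {ι : Type*} [Finite ι] {S : ι → Set ℂ}
    (hS : Injective S) {P : MvPolynomial ι ℂ} (hP : P ≠ 0) (h0 : constantCoeff P = 0) :
    aeval (fun i => codedFun (S i)) P ∈ SES \ PES := by
  refine ⟨aeval_codedFun_mem_SES hS fun hdeg => hP ?_, aeval_codedFun_notMem_PES S h0⟩
  rw [totalDegree_eq_zero_iff_eq_C.mp hdeg, ← constantCoeff_eq, h0, C_0]

theorem codedFun_injective : Injective codedFun := by
  intro S T hST
  by_contra hne
  obtain ⟨⟨x, -, hx⟩⟩ := mk_ne_zero_iff.mp <| ne_bot_of_le_ne_bot continuum_ne_zero <|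
    continuum_le_mk_codedFun_eq (S := fun b => cond b S T) (Bool.injective_iff.mpr (Ne.symm hne))
      (fun b => cond b 1 0) isOpen_univ univ_nonempty
  have h1 := hx true
  have h0 := hx false
  simp only [cond_true, cond_false, hST] at h1 h0
  exact one_ne_zero (h1.symm.trans h0)

/-- `SES(ℂ) \ PES(ℂ)` is strongly `2 ^ 𝔠`-algebrable in `ℂ^ℂ`. -/
theorem stmt6 : StronglyAlgebrable ℂ (SES \ PES) ((2 : Cardinal) ^ Cardinal.continuum) := by
  refine ⟨Set ℂ, codedFun, by rw [mk_set, mk_complex], codedFun_injective, fun S => ?_,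
    fun n _ P hP h0 ξ hξ => ?_⟩
  · simpa using aeval_codedFun_mem_SES_diff_PES (S := fun _ : Unit => S)
      (injective_of_subsingleton _) (X_ne_zero ()) (constantCoeff_X ℂ ())
  · have hmem := aeval_codedFun_mem_SES_diff_PES hξ hP h0
    exact ⟨ne_zero_of_mem_SES hmem.1, hmem⟩
end

section
/- Let f : ℂ → ℂ be perfectly everywhere surjective. Then: (a) for every uncountable Borel set A ⊆ ℂ, the restriction of f to A is not Borel measurable (as a function on the subspace A with its Borel σ-algebra); and (b) for every z ∈ ℂ, the preimage f⁻¹({z}) is a Bernstein set, i.e. both f⁻¹({z}) and its complement meet every nonempty perfect subset of ℂ. -/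
open Filter Topology Set

def IsBernstein {X : Type*} [TopologicalSpace X] (s : Set X) : Prop :=
  ∀ P : Set X, Perfect P → P.Nonempty → (P ∩ s).Nonempty ∧ (P \ s).Nonempty

instance Pi.perfectSpace_of_infinite {ι E : Type*} [Infinite ι] [TopologicalSpace E]
    [Nontrivial E] : PerfectSpace (ι → E) := by
  classical
  rw [perfectSpace_iff_forall_not_isolated]
  intro a
  choose b hb using fun i => exists_ne (a i)
  have hupdate : Tendsto (fun i => Function.update a i (b i)) cofinite (𝓝[≠] a) := by
    refine tendsto_nhdsWithin_of_tendsto_nhds_of_eventually_within _ ?_ ?_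
    · refine tendsto_pi_nhds.2 fun k => tendsto_nhds_of_eventually_eq ?_
      filter_upwards [eventually_cofinite_ne k] with i hik
      exact Function.update_of_ne (Ne.symm hik) _ _
    · refine Eventually.of_forall fun i h => hb i ?_
      simpa using congrFun h i
  exact hupdate.neBot

theorem perfect_range_of_continuous_injective {X Y : Type*} [TopologicalSpace X]
    [CompactSpace X] [PerfectSpace X] [TopologicalSpace Y] [T2Space Y] {g : X → Y}
    (hg : Continuous g) (hinj : Function.Injective g) : Perfect (range g) := by
  refine ⟨(isCompact_range hg).isClosed, ?_⟩
  rw [preperfect_iff_nhds]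
  rintro _ ⟨a, rfl⟩ U hU
  obtain ⟨b, hbU, hba⟩ :=
    (PerfectSpace.not_isolated a).nonempty_of_mem (inter_mem_nhdsWithin {a}ᶜ (hg.tendsto a hU))
  exact ⟨g b, ⟨hba, b, rfl⟩, hinj.ne hbU⟩

section Borel

variable {X : Type*} [TopologicalSpace X] [PolishSpace X] [MeasurableSpace X] [BorelSpace X]

theorem MeasurableSet.exists_nat_bool_injection_of_not_countable {A : Set X}
    (hA : MeasurableSet A) (hunc : ¬A.Countable) :
    ∃ g : (ℕ → Bool) → X, range g ⊆ A ∧ Continuous g ∧ Function.Injective g := by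
  obtain ⟨t, hle, ht, hA_closed, -⟩ := hA.isClopenable
  obtain ⟨g, hgA, hg, hinj⟩ :=
    @IsClosed.exists_nat_bool_injection_of_not_countable X t ht A hA_closed hunc
  exact ⟨g, hgA, continuous_le_rng hle hg, hinj⟩

theorem MeasurableSet.exists_perfect_nonempty_of_not_countable {A : Set X}
    (hA : MeasurableSet A) (hunc : ¬A.Countable) : ∃ P : Set X, Perfect P ∧ P.Nonempty ∧ P ⊆ A :=
  let ⟨g, hgA, hg, hinj⟩ := hA.exists_nat_bool_injection_of_not_countable hunc
  ⟨range g, perfect_range_of_continuous_injective hg hinj, range_nonempty g, hgA⟩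

theorem IsBernstein.not_measurableSet_inter {s A : Set X} (hs : IsBernstein s)
    (hA : MeasurableSet A) (hunc : ¬A.Countable) : ¬MeasurableSet (A ∩ s) := by
  intro hAs
  by_cases hcount : (A ∩ s).Countable
  · have hdiff_unc : ¬(A \ s).Countable := fun h =>
      hunc (by simpa only [inter_union_sdiff] using hcount.union h)
    obtain ⟨P, hP, hPne, hPA⟩ := (hA.diff hAs).exists_perfect_nonempty_of_not_countable
      (by rwa [sdiff_self_inter])
    obtain ⟨x, hxP, hxs⟩ := (hs P hP hPne).1
    exact (hPA hxP).2 ⟨(hPA hxP).1, hxs⟩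
  · obtain ⟨P, hP, hPne, hPA⟩ := hAs.exists_perfect_nonempty_of_not_countable hcount
    obtain ⟨x, hxP, hxs⟩ := (hs P hP hPne).2
    exact hxs (hPA hxP).2

end Borel

theorem PES.isBernstein_preimage_singleton {f : ℂ → ℂ} (hf : f ∈ PES) (z : ℂ) :
    IsBernstein (f ⁻¹' {z}) := by
  intro P hP hPne
  have hsurj : ∀ w, w ∈ f '' P := fun w => (hf P hP hPne).symm ▸ mem_univ w
  obtain ⟨w, hwz⟩ := exists_ne z
  obtain ⟨x, hxP, hxz⟩ := hsurj z
  obtain ⟨y, hyP, hyw⟩ := hsurj w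
  exact ⟨⟨x, hxP, hxz⟩, ⟨y, hyP, fun hyz => hwz (hyw.symm.trans hyz)⟩⟩

/-- If `f : ℂ → ℂ` is perfectly everywhere surjective then (a) for every
uncountable Borel set `A ⊆ ℂ` the restriction of `f` to `A` is not (Borel) measurable, and
(b) every fiber `f ⁻¹' {z}` is a Bernstein set: both it and its complement meet every
nonempty perfect subset of `ℂ`. -/
theorem stmt10 (f : ℂ → ℂ) (hf : f ∈ PES) :
    (∀ A : Set ℂ, MeasurableSet A → ¬ A.Countable →
      ¬ Measurable fun x : A => f x) ∧
    (∀ z : ℂ, ∀ P : Set ℂ, Perfect P → P.Nonempty →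
      (P ∩ f ⁻¹' {z}).Nonempty ∧ (P \ f ⁻¹' {z}).Nonempty) := by
  refine ⟨fun A hA hunc hmeas => ?_, PES.isBernstein_preimage_singleton hf⟩
  have hfiber : MeasurableSet (A ∩ f ⁻¹' {0}) := by
    rw [← Subtype.image_preimage_coe]
    exact hA.subtype_image (hmeas (measurableSet_singleton 0))
  exact (PES.isBernstein_preimage_singleton hf 0).not_measurableSet_inter hA hunc hfiber
end

section
/- Let F ⊆ ℝ be a Borel set that is 𝔠-dense in itself, let x ∈ F, and let I be an open neighbourhood of x. Then there exists a nonempty perfect set H ⊆ F ∩ I with x ∈ H. -/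
/-!
Every neighbourhood of `x` meets `F` in an uncountable Borel set, which by the perfect set
theorem for Borel sets contains a nonempty perfect set. Taking such perfect sets `P n` inside a
neighbourhood basis of `x` within `I`, the set `{x} ∪ ⋃ n, P n` is perfect: the `P n`
accumulate only at `x`, so the union is closed, and `x` is a limit of points of the `P n`.
-/

open Cardinal

/-- `A ⊆ ℝ` is `𝔠`-dense in itself: `A` is nonempty and for every open interval `I`, either
`A ∩ I = ∅` or `A ∩ I` has cardinality `𝔠`. -/
def CDenseInItself (A : Set ℝ) : Prop :=
  A.Nonempty ∧ ∀ a b : ℝ, a < b →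
    A ∩ Set.Ioo a b = ∅ ∨ #(A ∩ Set.Ioo a b : Set ℝ) = Cardinal.continuum

open Set Filter Topology

instance Pi.perfectSpace_nat {α : Type*} [TopologicalSpace α] [Nontrivial α] :
    PerfectSpace (ℕ → α) := by
  refine perfectSpace_iff_forall_not_isolated.2 fun z => ?_
  choose w hw using fun n => exists_ne (z n)
  have hlim : Tendsto (fun n => Function.update z n (w n)) atTop (𝓝 z) := by
    refine tendsto_pi_nhds.2 fun k => tendsto_const_nhds.congr' ?_
    filter_upwards [eventually_gt_atTop k] with n hn
    rw [Function.update_of_ne hn.ne]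
  refine (tendsto_nhdsWithin_of_tendsto_nhds_of_eventually_within _ hlim
    (Eventually.of_forall fun n => ?_)).neBot
  exact fun h => hw n (by simpa using congrFun h n)

theorem Continuous.perfect_range {X Y : Type*} [TopologicalSpace X] [CompactSpace X]
    [PerfectSpace X] [TopologicalSpace Y] [T2Space Y] {f : X → Y} (hf : Continuous f)
    (hinj : Function.Injective f) : Perfect (range f) := by
  refine ⟨(isCompact_range hf).isClosed, preperfect_iff_nhds.2 ?_⟩
  rintro _ ⟨z, rfl⟩ U hU
  obtain ⟨w, hwU, hwz⟩ :=
    ((((hf.tendsto z).eventually_mem hU).filter_mono nhdsWithin_le_nhds).and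
      (self_mem_nhdsWithin : {z}ᶜ ∈ 𝓝[≠] z)).exists
  exact ⟨f w, ⟨hwU, mem_range_self w⟩, hinj.ne hwz⟩

theorem MeasurableSet.exists_perfect_nonempty_of_not_countable_s15 {α : Type*} [TopologicalSpace α]
    [PolishSpace α] [MeasurableSpace α] [BorelSpace α] {s : Set α} (hs : MeasurableSet s)
    (hunc : ¬s.Countable) : ∃ D : Set α, Perfect D ∧ D.Nonempty ∧ D ⊆ s := by
  obtain ⟨f, hfs, hf, hinj⟩ : ∃ f : (ℕ → Bool) → α, range f ⊆ s ∧ Continuous f ∧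
      Function.Injective f := by
    obtain ⟨t, hle, hpolish, hclosed, -⟩ := hs.isClopenable
    obtain ⟨f, hfs, hf, hinj⟩ :=
      @IsClosed.exists_nat_bool_injection_of_not_countable α t hpolish s hclosed hunc
    exact ⟨f, hfs, continuous_le_rng hle hf, hinj⟩
  exact ⟨range f, hf.perfect_range hinj, range_nonempty f, hfs⟩

theorem Preperfect.exists_ne {X : Type*} [TopologicalSpace X] {C : Set X} (hC : Preperfect C)
    (hne : C.Nonempty) (x : X) : ∃ y ∈ C, y ≠ x := by
  obtain ⟨p, hp⟩ := hne
  rcases eq_or_ne p x with rfl | hpx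
  · obtain ⟨y, ⟨-, hy⟩, hyp⟩ := preperfect_iff_nhds.1 hC p hp univ univ_mem
    exact ⟨y, hy, hyp⟩
  · exact ⟨p, hp, hpx⟩

theorem perfect_insert_iUnion {X : Type*} [TopologicalSpace X] [T2Space X] {x : X}
    {P : ℕ → Set X} (hP : ∀ n, Perfect (P n)) (hne : ∀ n, (P n).Nonempty)
    (hlim : Tendsto P atTop (𝓝 x).smallSets) : Perfect (insert x (⋃ n, P n)) := by
  refine ⟨?_, ?_⟩
  · rw [← isOpen_compl_iff, isOpen_iff_mem_nhds]
    intro z hz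
    simp only [mem_compl_iff, mem_insert_iff, mem_iUnion, not_or, not_exists] at hz
    obtain ⟨hzx, hzP⟩ := hz
    obtain ⟨V, U, hV, hU, hVU⟩ := t2_separation_nhds hzx
    obtain ⟨N, hN⟩ := (tendsto_smallSets_iff.1 hlim U hU).exists_forall_of_atTop
    -- only the finitely many `P n` with `n < N` can come close to `z`
    have hnhds : V ∩ ⋂ n ∈ Iio N, (P n)ᶜ ∈ 𝓝 z :=
      inter_mem hV <| (biInter_mem (finite_Iio N)).2
        fun n _ => (hP n).closed.isOpen_compl.mem_nhds (hzP n)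
    refine mem_of_superset hnhds ?_
    rintro y ⟨hyV, hyP⟩ (rfl | hy)
    · exact hVU.ne_of_mem hyV (mem_of_mem_nhds hU) rfl
    · obtain ⟨n, hn⟩ := mem_iUnion.1 hy
      rcases lt_or_ge n N with hnN | hNn
      · exact mem_iInter₂.1 hyP n hnN hn
      · exact hVU.ne_of_mem hyV (hN n hNn hn) rfl
  · rintro z (rfl | hz)
    · refine accPt_iff_nhds.2 fun U hU => ?_
      obtain ⟨n, hn⟩ := (tendsto_smallSets_iff.1 hlim U hU).exists
      obtain ⟨y, hy, hyz⟩ := (hP n).acc.exists_ne (hne n) z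
      exact ⟨y, ⟨hn hy, mem_insert_of_mem _ (mem_iUnion.2 ⟨n, hy⟩)⟩, hyz⟩
    · obtain ⟨n, hn⟩ := mem_iUnion.1 hz
      exact ((hP n).acc z hn).mono
        (principal_mono.2 ((subset_iUnion P n).trans (subset_insert _ _)))

theorem exists_perfect_mem_subset_of_forall_mem_nhds {X : Type*} [TopologicalSpace X]
    [FirstCountableTopology X] [T2Space X] {x : X} {S : Set X} (hx : x ∈ S)
    (h : ∀ U ∈ 𝓝 x, ∃ P, Perfect P ∧ P.Nonempty ∧ P ⊆ S ∩ U) :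
    ∃ H, Perfect H ∧ x ∈ H ∧ H ⊆ S := by
  obtain ⟨u, hu⟩ := (𝓝 x).exists_antitone_basis
  choose P hP hne hPS using fun n => h (u n) (hu.mem n)
  refine ⟨_, perfect_insert_iUnion hP hne ?_, mem_insert x _, insert_subset hx ?_⟩
  · exact hu.tendsto_smallSets.smallSets_mono (Eventually.of_forall fun n => (hPS n).trans
      inter_subset_right)
  · exact iUnion_subset fun n => (hPS n).trans inter_subset_left

theorem CDenseInItself.not_countable_inter_Ioo {F : Set ℝ} (hF : CDenseInItself F) {x a b : ℝ}
    (hx : x ∈ F) (hxab : x ∈ Ioo a b) : ¬(F ∩ Ioo a b).Countable := by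
  rcases hF.2 a b (hxab.1.trans hxab.2) with hempty | hcard
  · exact fun _ => hempty.subset ⟨hx, hxab⟩
  · rw [← le_aleph0_iff_set_countable, hcard]
    exact aleph0_lt_continuum.not_ge

/-- If `F ⊆ ℝ` is a Borel set which is `𝔠`-dense in itself, `x ∈ F`, and `I`
is an open neighbourhood of `x`, then there is a nonempty perfect set `H ⊆ F ∩ I`
containing `x`. -/
theorem stmt15 (F : Set ℝ) (hB : MeasurableSet F) (hF : CDenseInItself F)
    (x : ℝ) (hx : x ∈ F) (I : Set ℝ) (hI : IsOpen I) (hxI : x ∈ I) :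
    ∃ H : Set ℝ, H ⊆ F ∩ I ∧ Perfect H ∧ H.Nonempty ∧ x ∈ H := by
  have hP : ∀ U ∈ 𝓝 x, ∃ P, Perfect P ∧ P.Nonempty ∧ P ⊆ F ∩ I ∩ U := by
    intro U hU
    obtain ⟨a, b, hxab, hab⟩ :=
      mem_nhds_iff_exists_Ioo_subset.1 (inter_mem (hI.mem_nhds hxI) hU)
    obtain ⟨P, hP, hne, hPF⟩ :=
      (hB.inter measurableSet_Ioo).exists_perfect_nonempty_of_not_countable_s15
        (hF.not_countable_inter_Ioo hx hxab)
    refine ⟨P, hP, hne, ?_⟩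
    rw [inter_assoc]
    exact hPF.trans (inter_subset_inter_right F hab)
  obtain ⟨H, hH, hxH, hHF⟩ := exists_perfect_mem_subset_of_forall_mem_nhds (mem_inter hx hxI) hP
  exact ⟨H, hHF, hH, ⟨x, hxH⟩, hxH⟩
end

section
/- Let G ⊆ ℝ be a Gδ set and let C_G be the set of all functions f : ℝ → ℝ whose set of continuity points {x ∈ ℝ : f is continuous at x} equals G. Then the following are equivalent: (i) C_G is strongly 2^𝔠-algebrable in the algebra ℝ^ℝ; (ii) C_G is 𝔠⁺-lineable, where 𝔠⁺ is the successor cardinal of 𝔠; (iii) ℝ \ G is 𝔠-dense in itself. -/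
/-!
(iii) ⇒ (i). Write `ℝ \ G` as a countable union of closed sets `K n`. All but countably many
points of `K n` are condensation points of `K n`, and each remaining point `x` is a condensation
point of a closed set `{x} ∪ ⋃ k, C k ⊆ ℝ \ G` with `C k` uncountable and `1 / (k + 1)`-close
to `x`. This gives countably many closed `P i ⊆ ℝ \ G`, with scales `r i → 0`, such that every
point of `ℝ \ G` is a condensation point of some `P i`. By transfinite recursion pick distinct
points `H d ∈ P i ∩ (a, b)` for the `𝔠` demands `d = (i, a, b, c)`, where `c` is a code of an
independent family; the generator indexed by `X ⊆ ℝ` takes at `H d` the value of `c` at `X`,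
clamped to `[-r i, r i]`, and vanishes elsewhere. A polynomial in distinct generators is
continuous on `G`, where the generators tend to `0` because only finitely many `P i` carry
values above a given size, and discontinuous at each `x ∉ G`, because near `x` it takes every
value of the polynomial on a box `[-r i, r i]ⁿ`, on which a nonconstant polynomial is not
constant.

(i) ⇒ (ii) since linear combinations are polynomials and `𝔠⁺ ≤ 2 ^ 𝔠`.

(ii) ⇒ (iii). Suppose `ℝ \ G` is empty, or meets some `(a, b)` in a nonempty set `D` of size
`< 𝔠`, hence countable since `ℝ \ G` is `Fσ`. A function in `C_G` vanishing on the rationals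
and on `D` vanishes on `ℝ`, resp. on `(a, b)`, so it is continuous there: in the second case
this is impossible. So restriction to a countable set is injective on any subspace inside
`C_G ∪ {0}`, whose dimension is then at most `𝔠`.
-/

open Cardinal

/-- A subset `E` of a real vector space is `κ`-lineable if `E ∪ {0}` contains a linear
subspace of dimension `κ`. -/
def Lineable {M : Type} [AddCommGroup M] [Module ℝ M] (E : Set M) (κ : Cardinal) : Prop :=
  ∃ V : Submodule ℝ M, Module.rank ℝ V = κ ∧ (V : Set M) ⊆ E ∪ {0}

/-- The set of all `f : ℝ → ℝ` whose set of continuity points equals `G`. -/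
def ContinuityClass (G : Set ℝ) : Set (ℝ → ℝ) :=
  {f | {x : ℝ | ContinuousAt f x} = G}

open Set Filter Topology

section Transversal

universe u

theorem exists_injective_forall_mem_of_mk_Iio_lt {α β : Type u} [LinearOrder β] [WellFoundedLT β]
    (S : β → Set α) (hS : ∀ b, #(Iio b) < #(S b)) :
    ∃ H : β → α, Function.Injective H ∧ ∀ b, H b ∈ S b := by
  have hfresh (b : β) (H : Iio b → α) : (S b \ range H).Nonempty := by
    by_contra h
    rw [not_nonempty_iff_eq_empty, sdiff_eq_empty] at h
    exact (hS b).not_ge ((mk_le_mk_of_subset h).trans mk_range_le)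
  let H : β → α := WellFoundedLT.fix fun b H ↦ (hfresh b fun c ↦ H c c.2).some
  have hH (b : β) : H b ∈ S b \ H '' Iio b := by
    rw [show H b = _ from WellFoundedLT.fix_eq _ b, image_eq_range]
    exact Nonempty.some_mem _
  refine ⟨H, fun b c hbc ↦ ?_, fun b ↦ (hH b).1⟩
  by_contra hne
  rcases lt_or_gt_of_ne hne with h | h
  · exact (hH c).2 ⟨b, h, hbc⟩
  · exact (hH b).2 ⟨c, h, hbc.symm⟩

theorem exists_injective_forall_mem {ι α : Type u} {κ : Cardinal.{u}} (S : ι → Set α)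
    (hι : #ι ≤ κ) (hS : ∀ i, κ ≤ #(S i)) :
    ∃ H : ι → α, Function.Injective H ∧ ∀ i, H i ∈ S i := by
  obtain ⟨e⟩ : Nonempty (ι ≃ (#ι).ord.ToType) := Cardinal.eq.1 (mk_ord_toType _).symm
  obtain ⟨H, hinj, hmem⟩ := exists_injective_forall_mem_of_mk_Iio_lt (S ∘ e.symm) fun b ↦
    calc #(Iio b) < #ι := by simpa using mk_Iio_lt b
      _ ≤ #(S (e.symm b)) := hι.trans (hS _)
  exact ⟨H ∘ e, hinj.comp e.injective, fun i ↦ by simpa using hmem (e i)⟩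

end Transversal

section Condensation

variable {α : Type*} [TopologicalSpace α]

def IsCondensationPt (x : α) (P : Set α) : Prop :=
  ∀ U ∈ 𝓝 x, ¬(P ∩ U).Countable

theorem countable_setOf_not_isCondensationPt [SecondCountableTopology α] (P : Set α) :
    {x ∈ P | ¬IsCondensationPt x P}.Countable := by
  obtain ⟨b, hbc, -, hb⟩ := TopologicalSpace.exists_countable_basis α
  refine ((hbc.mono (sep_subset b fun U ↦ (P ∩ U).Countable)).biUnion
    fun U hU ↦ hU.2).mono ?_
  rintro x ⟨hxP, hx⟩
  simp only [IsCondensationPt, not_forall, not_not] at hx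
  obtain ⟨U, hU, hcount⟩ := hx
  obtain ⟨V, hVb, hxV, hVU⟩ := hb.mem_nhds_iff.1 hU
  exact mem_biUnion ⟨hVb, hcount.mono (inter_subset_inter_right P hVU)⟩ ⟨hxP, hxV⟩

theorem IsClosed.continuum_le_mk_of_not_countable {C : Set ℝ} (hC : IsClosed C)
    (h : ¬C.Countable) : 𝔠 ≤ #C := by
  obtain ⟨f, hfC, -, hf⟩ := hC.exists_nat_bool_injection_of_not_countable h
  calc 𝔠 = #(ℕ → Bool) := by simp
    _ ≤ #C := mk_le_of_injective (f := fun s ↦ ⟨f s, hfC ⟨s, rfl⟩⟩)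
        fun s t hst ↦ hf (congrArg Subtype.val hst)

theorem IsCondensationPt.continuum_le_mk_inter {x : ℝ} {P U : Set ℝ} (hP : IsClosed P)
    (hx : IsCondensationPt x P) (hU : U ∈ 𝓝 x) : 𝔠 ≤ #(P ∩ U : Set ℝ) := by
  obtain ⟨t, ht, htc, htU⟩ := exists_mem_nhds_isClosed_subset hU
  exact ((hP.inter htc).continuum_le_mk_of_not_countable (hx t ht)).trans
    (mk_le_mk_of_subset (inter_subset_inter_right P htU))

theorem IsGδ.countable_compl_of_mk_lt {S : Set ℝ} (hS : IsGδ S) (h : #(Sᶜ : Set ℝ) < 𝔠) :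
    Sᶜ.Countable := by
  obtain ⟨U, hUo, rfl⟩ := isGδ_iff_eq_iInter_nat.1 hS
  rw [compl_iInter] at h ⊢
  refine countable_iUnion fun n ↦ not_not.1 fun hn ↦ ?_
  exact h.not_ge (((hUo n).isClosed_compl.continuum_le_mk_of_not_countable hn).trans
    (mk_le_mk_of_subset (subset_iUnion (fun n ↦ (U n)ᶜ) n)))

end Condensation

section Pools

open Metric

variable {α : Type*} [MetricSpace α]

theorem exists_isClosed_isCondensationPt_of_mem_iUnion {K : ℕ → Set α}
    (hK : ∀ n, IsClosed (K n)) {x : α} (hx : x ∈ ⋃ n, K n)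
    (hxc : IsCondensationPt x (⋃ n, K n)) :
    ∃ Q ⊆ ⋃ n, K n, IsClosed Q ∧ IsCondensationPt x Q := by
  have hball (k : ℕ) : closedBall x (1 / (k + 1)) ∈ 𝓝 x :=
    Metric.closedBall_mem_nhds x (by positivity)
  have (k : ℕ) : ∃ n, ¬(K n ∩ closedBall x (1 / (k + 1))).Countable := by
    by_contra! h
    exact hxc _ (hball k) (by rw [iUnion_inter]; exact countable_iUnion h)
  choose n hn using this
  set C : ℕ → Set α := fun k ↦ K (n k) ∩ closedBall x (1 / (k + 1))
  -- `Q` is `{x} ∪ ⋃ k, C k`, written so that it is visibly closed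
  set Q := ⋂ k : ℕ, (closedBall x (1 / (k + 1)) ∪ ⋃ j ∈ Iio k, C j)
  have hCQ (k : ℕ) : C k ⊆ Q := by
    refine fun y hy ↦ mem_iInter.2 fun m ↦ ?_
    rcases le_or_gt m k with hmk | hkm
    · refine Or.inl (closedBall_subset_closedBall ?_ hy.2)
      gcongr
    · exact Or.inr (mem_biUnion hkm hy)
  refine ⟨Q, fun y hy ↦ ?_, ?_, fun U hU ↦ ?_⟩
  · rcases eq_or_ne y x with rfl | hyx
    · exact hx
    obtain ⟨k, hk⟩ := exists_nat_one_div_lt (dist_pos.2 hyx)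
    rcases mem_iInter.1 hy k with hyk | hyk
    · exact absurd (mem_closedBall.1 hyk) (not_le.2 hk)
    · obtain ⟨j, -, hj⟩ := mem_iUnion₂.1 hyk
      exact mem_iUnion.2 ⟨n j, hj.1⟩
  · exact isClosed_iInter fun k ↦ Metric.isClosed_closedBall.union
      ((finite_Iio k).isClosed_biUnion fun j _ ↦ (hK _).inter Metric.isClosed_closedBall)
  · obtain ⟨ε, hε, hεU⟩ := Metric.mem_nhds_iff.1 hU
    obtain ⟨k, hk⟩ := exists_nat_one_div_lt hε
    have hCU : C k ⊆ Q ∩ U := fun y hy ↦ ⟨hCQ k hy, hεU (closedBall_subset_ball hk hy.2)⟩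
    exact fun hQU ↦ hn k (hQU.mono hCU)

variable [SecondCountableTopology α]

theorem exists_countable_closed_cover_isCondensationPt {K : ℕ → Set α}
    (hK : ∀ n, IsClosed (K n)) (hc : ∀ x ∈ ⋃ n, K n, IsCondensationPt x (⋃ n, K n)) :
    ∃ Ps : Set (Set α), Ps.Countable ∧ (∀ Q ∈ Ps, IsClosed Q ∧ Q ⊆ ⋃ n, K n) ∧
      ∀ x ∈ ⋃ n, K n, ∃ Q ∈ Ps, IsCondensationPt x Q := by
  set E := ⋃ n, {x ∈ K n | ¬IsCondensationPt x (K n)}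
  have hE : E.Countable := countable_iUnion fun n ↦ countable_setOf_not_isCondensationPt (K n)
  have hEK : E ⊆ ⋃ n, K n := iUnion_mono fun n ↦ sep_subset _ _
  have (x : E) := exists_isClosed_isCondensationPt_of_mem_iUnion hK (hEK x.2) (hc x (hEK x.2))
  choose pool hpool hpool_closed hpool_cond using this
  have := hE.to_subtype
  refine ⟨range K ∪ range pool, (countable_range K).union (countable_range pool), ?_, ?_⟩
  · rintro Q (⟨n, rfl⟩ | ⟨x, rfl⟩)
    exacts [⟨hK n, subset_iUnion K n⟩, ⟨hpool_closed x, hpool x⟩]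
  · intro x hx
    obtain ⟨n, hxn⟩ := mem_iUnion.1 hx
    by_cases hxc : IsCondensationPt x (K n)
    · exact ⟨K n, Or.inl ⟨n, rfl⟩, hxc⟩
    · exact ⟨pool ⟨x, mem_iUnion.2 ⟨n, hxn, hxc⟩⟩, Or.inr ⟨_, rfl⟩, hpool_cond ⟨x, _⟩⟩

end Pools

namespace MvPolynomial

theorem exists_eval_ne_eval {R σ : Type*} [CommRing R] [IsDomain R] {p : MvPolynomial σ R}
    (hp : p ≠ 0) (hp0 : constantCoeff p = 0) {s : σ → Set R} (hs : ∀ i, (s i).Infinite) :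
    ∃ x ∈ univ.pi s, ∃ y ∈ univ.pi s, eval x p ≠ eval y p := by
  obtain ⟨x, hx⟩ : (univ.pi s).Nonempty := univ_pi_nonempty_iff.2 fun i ↦ (hs i).nonempty
  by_contra! h
  have hC : p = C (eval x p) := funext_set s hs fun y hy ↦ by rw [eval_C, h x hx y hy]
  rw [hC, constantCoeff_C] at hp0
  exact hp (by rw [hC, hp0, map_zero])

theorem aeval_pi_apply_s17 {R σ X : Type*} [CommSemiring R] (F : σ → X → R) (p : MvPolynomial σ R)
    (y : X) : aeval F p y = eval (fun i ↦ F i y) p := by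
  simpa using congrArg (· p) (comp_aeval F (Pi.evalAlgHom R (fun _ ↦ R) y))

theorem continuousAt_aeval {R σ X : Type*} [CommSemiring R] [TopologicalSpace R]
    [IsTopologicalSemiring R] [TopologicalSpace X] {F : σ → X → R} {z : X}
    (hF : ∀ i, ContinuousAt (F i) z) (p : MvPolynomial σ R) : ContinuousAt (aeval F p) z := by
  rw [show aeval F p = fun y ↦ eval (fun i ↦ F i y) p from _root_.funext (aeval_pi_apply_s17 F p)]
  exact (continuous_eval p).continuousAt.comp (continuousAt_pi.2 hF)

end MvPolynomial

section Algebrability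

open MvPolynomial

variable {K A : Type} [CommRing K] [CommRing A] [Algebra K A]

theorem exists_aeval_eq_linearCombination {ι : Type*} (x : ι → A) {c : ι →₀ K} (hc : c ≠ 0) :
    ∃ (n : ℕ) (P : MvPolynomial (Fin n) K) (ξ : Fin n → ι), 0 < n ∧ Function.Injective ξ ∧
      P ≠ 0 ∧ constantCoeff P = 0 ∧
      aeval (fun k ↦ x (ξ k)) P = Finsupp.linearCombination K x c := by
  classical
  set e := c.support.equivFin
  set ξ : Fin c.support.card → ι := fun k ↦ e.symm k
  refine ⟨_, ∑ k, c (ξ k) • X k, ξ, Finset.card_pos.2 (Finsupp.support_nonempty_iff.2 hc),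
    Subtype.val_injective.comp e.symm.injective, fun h ↦ ?_, by simp, ?_⟩
  · obtain ⟨i, hi⟩ := Finsupp.support_nonempty_iff.2 hc
    have := Fintype.linearIndependent_iff.1 (linearIndependent_X (Fin _) K) _ h (e ⟨i, hi⟩)
    simp [ξ] at this
    exact Finsupp.mem_support_iff.1 hi this
  · simp only [map_sum, map_smul, aeval_X, Finsupp.linearCombination_apply, Finsupp.sum]
    rw [← Finset.sum_coe_sort c.support]
    exact e.symm.sum_comp fun i : c.support ↦ c i • x i

theorem stronglyAlgebrable_of_forall_aeval_mem [Nontrivial K] {E : Set A} (h0 : (0 : A) ∉ E)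
    {ι : Type} (x : ι → A)
    (hx : ∀ (n : ℕ) (P : MvPolynomial (Fin n) K), P ≠ 0 → constantCoeff P = 0 →
      ∀ ξ : Fin n → ι, Function.Injective ξ → aeval (fun k ↦ x (ξ k)) P ∈ E) :
    StronglyAlgebrable K E #ι := by
  have hmem (i : ι) : x i ∈ E := by
    simpa using hx 1 (X 0) (X_ne_zero _) (constantCoeff_X _ _) (fun _ ↦ i)
      fun a b _ ↦ Subsingleton.elim a b
  refine ⟨ι, x, rfl, fun i j hij ↦ ?_, hmem, fun n _ P hP hP0 ξ hξ ↦
    ⟨ne_of_mem_of_not_mem (hx n P hP hP0 ξ hξ) h0, hx n P hP hP0 ξ hξ⟩⟩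
  by_contra hne
  have hinj : Function.Injective ![i, j] := fun a b hab ↦ by
    fin_cases a <;> fin_cases b <;> simp_all [eq_comm]
  have := hx 2 (X 0 - X 1) (sub_ne_zero.2 (X_injective.ne (by decide))) (by simp) _ hinj
  exact h0 (by simpa [hij] using this)

theorem StronglyAlgebrable.lineable [Algebra ℝ A] {E : Set A} {κ κ' : Cardinal}
    (h : StronglyAlgebrable ℝ E κ) (hκ : κ' ≤ κ) : Lineable E κ' := by
  obtain ⟨ι, x, rfl, hx, -, hfree⟩ := h
  obtain ⟨S, rfl⟩ := le_mk_iff_exists_set.1 hκ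
  set v : S → A := fun i ↦ x i
  have hv (c : S →₀ ℝ) (hc : c ≠ 0) :
      Finsupp.linearCombination ℝ v c ≠ 0 ∧ Finsupp.linearCombination ℝ v c ∈ E := by
    obtain ⟨n, P, ξ, hn, hξ, hP, hP0, hPc⟩ := exists_aeval_eq_linearCombination v hc
    rw [← hPc]
    exact hfree n hn P hP hP0 _ (Subtype.val_injective.comp hξ)
  have hli : LinearIndependent ℝ v :=
    linearIndependent_iff.2 fun c hc ↦ by_contra fun h ↦ (hv c h).1 hc
  refine ⟨Submodule.span ℝ (range v), ?_, ?_⟩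
  · rw [rank_span hli, mk_range_eq v (hx.comp Subtype.val_injective)]
  · rintro _ hf
    rw [SetLike.mem_coe, ← Finsupp.range_linearCombination] at hf
    obtain ⟨c, rfl⟩ := hf
    by_cases hc : c = 0
    · simp [hc]
    · exact Or.inl (hv c hc).2

end Algebrability

section Lineability

variable {G : Set ℝ}

theorem zero_notMem_continuityClass (hG : Gᶜ.Nonempty) : (0 : ℝ → ℝ) ∉ ContinuityClass G := by
  obtain ⟨x, hx⟩ := hG
  intro h
  exact hx (h ▸ continuousAt_const)

theorem Set.EqOn.subset_of_mem_continuityClass {f : ℝ → ℝ} (hf : f ∈ ContinuityClass G) {U : Set ℝ}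
    (hU : IsOpen U) (h0 : EqOn f 0 U) : U ⊆ G := fun x hx ↦ by
  rw [← hf]
  exact continuousAt_const.congr (Filter.eventuallyEq_of_mem (hU.mem_nhds hx) h0).symm

theorem eqOn_zero_of_mem_continuityClass {f : ℝ → ℝ} (hf : f ∈ ContinuityClass G) {U : Set ℝ}
    (hU : IsOpen U) (h0 : ∀ x ∈ U, x ∈ range ((↑) : ℚ → ℝ) ∪ Gᶜ → f x = 0) : EqOn f 0 U := by
  intro x hx
  by_cases hxG : x ∈ G
  · have hfx : ContinuousAt f x := by rwa [← hf] at hxG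
    have hcl := mem_closure_image hfx (Rat.denseRange_cast.open_subset_closure_inter hU hx)
    have himage : f '' (U ∩ range ((↑) : ℚ → ℝ)) ⊆ {0} := by
      rintro _ ⟨y, hy, rfl⟩
      exact h0 y hy.1 (Or.inl hy.2)
    simpa using closure_mono himage hcl
  · exact h0 x hx (Or.inr hxG)

theorem rank_le_continuum_of_eqOn_zero {α : Type} {V : Submodule ℝ (α → ℝ)} {T : Set α}
    (hT : T.Countable) (hV : ∀ f ∈ V, EqOn f 0 T → f = 0) : Module.rank ℝ V ≤ 𝔠 := by
  have := hT.to_subtype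
  set restrict := (LinearMap.funLeft ℝ ℝ ((↑) : T → α)).comp V.subtype
  have hinj : Function.Injective restrict := by
    refine (injective_iff_map_eq_zero restrict).2 fun f hf ↦ Subtype.ext (hV f f.2 fun t ht ↦ ?_)
    exact congrFun hf ⟨t, ht⟩
  calc Module.rank ℝ V ≤ Module.rank ℝ (T → ℝ) := restrict.rank_le_of_injective hinj
    _ ≤ #(T → ℝ) := rank_le_card ℝ _
    _ = 𝔠 ^ #T := by rw [← power_def, mk_real]
    _ ≤ 𝔠 ^ ℵ₀ := power_le_power_left continuum_ne_zero mk_le_aleph0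
    _ = 𝔠 := continuum_power_aleph0

theorem cDenseInItself_compl_of_lineable (hG : IsGδ G)
    (h : Lineable (ContinuityClass G) (Order.succ 𝔠)) : CDenseInItself Gᶜ := by
  obtain ⟨V, hrank, hV⟩ := h
  have hV0 {T : Set ℝ} (hT : T.Countable) : ¬∀ f ∈ V, EqOn f 0 T → f = 0 := fun hTV ↦
    (rank_le_continuum_of_eqOn_zero hT hTV).not_gt (hrank ▸ Order.lt_succ 𝔠)
  constructor
  · by_contra hne
    refine hV0 (countable_range ((↑) : ℚ → ℝ)) fun f hf hf0 ↦ ?_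
    rcases hV hf with hfG | hf
    · refine _root_.funext fun x ↦ eqOn_zero_of_mem_continuityClass hfG isOpen_univ ?_ (mem_univ x)
      rintro y - (hy | hy)
      exacts [hf0 hy, (hne ⟨y, hy⟩).elim]
    · exact hf
  · intro a b hab
    by_contra! hbad
    obtain ⟨x, hxG, hx⟩ := hbad.1
    have hcount : (Gᶜ ∩ Ioo a b).Countable := by
      have := (hG.union (isOpen_Ioo (a := a) (b := b)).isClosed_compl.isGδ).countable_compl_of_mk_lt
      rw [compl_union, compl_compl] at this
      exact this ((mk_set_le _).trans_eq mk_real |>.lt_of_ne hbad.2)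
    refine hV0 ((countable_range ((↑) : ℚ → ℝ)).union hcount) fun f hf hf0 ↦
      (hV hf).resolve_left fun hfG ↦ ?_
    have h0 := eqOn_zero_of_mem_continuityClass hfG isOpen_Ioo fun y hy hy' ↦
      hf0 (hy'.imp id fun h ↦ ⟨h, hy⟩)
    exact hxG (h0.subset_of_mem_continuityClass hfG isOpen_Ioo hx)

end Lineability

section IndependentFamily

variable {α ι : Type*} [Finite ι]

open Classical in
theorem exists_finset_injective_filter {X : ι → Set α} (hX : Function.Injective X) :
    ∃ A : Finset α, Function.Injective fun i ↦ {a ∈ A | a ∈ X i} := by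
  have (p : {p : ι × ι // p.1 ≠ p.2}) : ∃ a, ¬(a ∈ X p.1.1 ↔ a ∈ X p.1.2) := by
    by_contra! h
    exact p.2 (hX (Set.ext h))
  choose w hw using this
  refine ⟨(finite_range w).toFinset, fun i j hij ↦ by_contra fun hne ↦ hw ⟨(i, j), hne⟩ ?_⟩
  have hA : w ⟨(i, j), hne⟩ ∈ (finite_range w).toFinset := by simp
  simpa [hA] using Finset.ext_iff.1 hij (w ⟨(i, j), hne⟩)

/-- Codes of an independent family of real functions on `Set α`. -/
abbrev IndepCode (α : Type*) := Finset α × (Finset α →₀ ℝ)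

open Classical in
noncomputable def IndepCode.eval (c : IndepCode α) (X : Set α) : ℝ :=
  c.2 {a ∈ c.1 | a ∈ X}

theorem IndepCode.exists_eval_eq {X : ι → Set α} (hX : Function.Injective X) (v : ι → ℝ) :
    ∃ c : IndepCode α, ∀ i, c.eval (X i) = v i := by
  classical
  obtain ⟨A, hA⟩ := exists_finset_injective_filter hX
  exact ⟨(A, Finsupp.mapDomain _ (Finsupp.equivFunOnFinite.symm v)), fun i ↦
    (Finsupp.mapDomain_apply hA _ i).trans (by simp)⟩

end IndependentFamily

section ScaledSupports

theorem tendsto_nhds_zero_of_abs_le_of_mem {α ι : Type*} [TopologicalSpace α] {P : ι → Set α}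
    (hP : ∀ i, IsClosed (P i)) {r : ι → ℝ} (hr : Tendsto r cofinite (𝓝 0)) {f : α → ℝ}
    (hf : ∀ y, f y ≠ 0 → ∃ i, y ∈ P i ∧ |f y| ≤ r i) {z : α} (hz : ∀ i, z ∉ P i) :
    Tendsto f (𝓝 z) (𝓝 0) := by
  rw [Metric.tendsto_nhds]
  intro ε hε
  have hfin : {i | ¬r i < ε}.Finite := eventually_cofinite.1 (hr.eventually_lt_const hε)
  have hA : IsClosed (⋃ i ∈ {i | ¬r i < ε}, P i) := hfin.isClosed_biUnion fun i _ ↦ hP i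
  have hzA : z ∉ ⋃ i ∈ {i | ¬r i < ε}, P i := fun h ↦ by
    obtain ⟨i, -, hi⟩ := mem_iUnion₂.1 h
    exact hz i hi
  filter_upwards [hA.isOpen_compl.mem_nhds hzA] with y hy
  rw [Real.dist_eq, sub_zero]
  by_cases hy0 : f y = 0
  · simpa [hy0] using hε
  obtain ⟨i, hi, hle⟩ := hf y hy0
  have : r i < ε := by_contra fun h ↦ hy (mem_biUnion h hi)
  linarith

theorem exists_pos_tendsto_cofinite_zero (ι : Type*) [Countable ι] :
    ∃ r : ι → ℝ, (∀ i, 0 < r i) ∧ Tendsto r cofinite (𝓝 0) := by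
  obtain ⟨e, he⟩ := exists_injective_nat ι
  refine ⟨fun i ↦ 1 / (e i + 1), fun i ↦ by positivity, ?_⟩
  exact tendsto_one_div_add_atTop_nhds_zero_nat.comp
    (Nat.cofinite_eq_atTop ▸ he.tendsto_cofinite)

end ScaledSupports

theorem CDenseInItself.isCondensationPt {F : Set ℝ} (h : CDenseInItself F) {x : ℝ}
    (hx : x ∈ F) : IsCondensationPt x F := by
  intro U hU hcount
  obtain ⟨a, b, hxab, habU⟩ := mem_nhds_iff_exists_Ioo_subset.1 hU
  rcases h.2 a b (hxab.1.trans hxab.2) with h0 | hc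
  · exact h0.subset ⟨hx, hxab⟩
  · refine aleph0_lt_continuum.not_ge (hc ▸ ?_)
    exact (hcount.mono (inter_subset_inter_right F habU)).le_aleph0

namespace ContinuityClass

variable {ι : Type}

/-- A request for a point of `P level` in `(lo, hi)` at which the generators read `code`. -/
structure Demand (P : ι → Set ℝ) where
  level : ι
  lo : ℝ
  hi : ℝ
  code : IndepCode ℝ
  continuum_le : 𝔠 ≤ #(P level ∩ Ioo lo hi : Set ℝ)

theorem mk_demand_le [Countable ι] (P : ι → Set ℝ) : #(Demand P) ≤ 𝔠 := by
  have hinj : Function.Injective fun d : Demand P ↦ (d.level, d.lo, d.hi, d.code) := by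
    rintro ⟨⟩ ⟨⟩ h
    simp_all
  calc #(Demand P) ≤ #(ι × ℝ × ℝ × IndepCode ℝ) := mk_le_of_injective hinj
    _ = #ι * 𝔠 := by simp [mk_real]
    _ ≤ ℵ₀ * 𝔠 := by gcongr; exact mk_le_aleph0
    _ = 𝔠 := aleph0_mul_continuum

variable {P : ι → Set ℝ} {r : ι → ℝ} {H : Demand P → ℝ}

noncomputable def generator (r : ι → ℝ) (H : Demand P → ℝ) (X : Set ℝ) : ℝ → ℝ :=
  Function.extend H (fun d ↦ max (-r d.level) (min (r d.level) (d.code.eval X))) 0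

theorem generator_apply (hH : Function.Injective H) (X : Set ℝ) (d : Demand P) :
    generator r H X (H d) = max (-r d.level) (min (r d.level) (d.code.eval X)) :=
  hH.extend_apply _ _ d

theorem continuousAt_generator (hH : Function.Injective H)
    (hHP : ∀ d, H d ∈ P d.level ∩ Ioo d.lo d.hi) (hP : ∀ i, IsClosed (P i))
    (hrpos : ∀ i, 0 < r i) (hr : Tendsto r cofinite (𝓝 0)) (X : Set ℝ) {z : ℝ}
    (hz : ∀ i, z ∉ P i) : ContinuousAt (generator r H X) z := by
  have hz0 : generator r H X z = 0 :=
    Function.extend_apply' _ _ z fun ⟨d, hd⟩ ↦ hz d.level (hd ▸ (hHP d).1)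
  rw [ContinuousAt, hz0]
  refine tendsto_nhds_zero_of_abs_le_of_mem hP hr (fun y hy ↦ ?_) hz
  by_cases hyH : ∃ d, H d = y
  · obtain ⟨d, rfl⟩ := hyH
    refine ⟨d.level, (hHP d).1, ?_⟩
    rw [generator_apply hH, abs_le]
    exact ⟨le_max_left _ _, max_le (by linarith [hrpos d.level]) (min_le_left _ _)⟩
  · exact absurd (Function.extend_apply' _ _ y hyH) hy

theorem frequently_forall_generator_eq (hH : Function.Injective H)
    (hHP : ∀ d, H d ∈ P d.level ∩ Ioo d.lo d.hi) {i : ι} {x : ℝ} (hPi : IsClosed (P i))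
    (hx : IsCondensationPt x (P i)) {κ : Type*} [Finite κ] {X : κ → Set ℝ}
    (hX : Function.Injective X) {t : κ → ℝ} (ht : ∀ k, |t k| ≤ r i) :
    ∃ᶠ y in 𝓝 x, ∀ k, generator r H (X k) y = t k := by
  obtain ⟨c, hc⟩ := IndepCode.exists_eval_eq hX t
  rw [Filter.frequently_iff]
  intro U hU
  obtain ⟨a, b, hxab, habU⟩ := mem_nhds_iff_exists_Ioo_subset.1 hU
  let d : Demand P := ⟨i, a, b, c, hx.continuum_le_mk_inter hPi (Ioo_mem_nhds hxab.1 hxab.2)⟩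
  refine ⟨H d, habU (hHP d).2, fun k ↦ ?_⟩
  obtain ⟨hlo, hhi⟩ := abs_le.1 (ht k)
  rw [generator_apply hH, hc k, min_eq_right hhi, max_eq_right hlo]

open MvPolynomial in
theorem not_continuousAt_aeval_generator (hH : Function.Injective H)
    (hHP : ∀ d, H d ∈ P d.level ∩ Ioo d.lo d.hi) (hrpos : ∀ i, 0 < r i) {i : ι} {x : ℝ}
    (hPi : IsClosed (P i)) (hx : IsCondensationPt x (P i)) {n : ℕ} {Q : MvPolynomial (Fin n) ℝ}
    (hQ : Q ≠ 0) (hQ0 : constantCoeff Q = 0) {ξ : Fin n → Set ℝ} (hξ : Function.Injective ξ) :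
    ¬ContinuousAt (aeval (fun k ↦ generator r H (ξ k)) Q) x := by
  intro hcont
  -- continuity at `x` forces the value there to equal every value of `Q` on the box
  have hbox (t) (ht : t ∈ univ.pi fun _ ↦ Icc (-r i) (r i)) :
      aeval (fun k ↦ generator r H (ξ k)) Q x = eval t Q := by
    refine tendsto_nhds_unique_of_frequently_eq hcont tendsto_const_nhds ?_
    refine (frequently_forall_generator_eq hH hHP hPi hx hξ fun k ↦
      abs_le.2 (ht k trivial)).mono fun y hy ↦ ?_
    simp [aeval_pi_apply_s17, hy]
  obtain ⟨t, ht, t', ht', hne⟩ :=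
    exists_eval_ne_eval hQ hQ0 fun _ ↦ Icc_infinite (neg_lt_self (hrpos i))
  exact hne ((hbox t ht).symm.trans (hbox t' ht'))

open MvPolynomial in
theorem aeval_generator_mem (hH : Function.Injective H)
    (hHP : ∀ d, H d ∈ P d.level ∩ Ioo d.lo d.hi) {G : Set ℝ} (hP : ∀ i, IsClosed (P i))
    (hPG : ∀ i, P i ⊆ Gᶜ) (hcover : ∀ x ∈ Gᶜ, ∃ i, IsCondensationPt x (P i))
    (hrpos : ∀ i, 0 < r i) (hr : Tendsto r cofinite (𝓝 0)) {n : ℕ}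
    {Q : MvPolynomial (Fin n) ℝ} (hQ : Q ≠ 0) (hQ0 : constantCoeff Q = 0)
    {ξ : Fin n → Set ℝ} (hξ : Function.Injective ξ) :
    aeval (fun k ↦ generator r H (ξ k)) Q ∈ ContinuityClass G := by
  ext z
  refine ⟨fun hz ↦ by_contra fun hzG ↦ ?_, fun hzG ↦ ?_⟩
  · obtain ⟨i, hzc⟩ := hcover z hzG
    exact not_continuousAt_aeval_generator hH hHP hrpos (hP i) hzc hQ hQ0 hξ hz
  · exact continuousAt_aeval (fun k ↦
      continuousAt_generator hH hHP hP hrpos hr _ fun i hzi ↦ hPG i hzi hzG) Q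

theorem stronglyAlgebrable {G : Set ℝ} (hG : IsGδ G) (h : CDenseInItself Gᶜ) :
    StronglyAlgebrable ℝ (ContinuityClass G) (2 ^ 𝔠) := by
  obtain ⟨K, hK, hGK⟩ : ∃ K : ℕ → Set ℝ, (∀ n, IsClosed (K n)) ∧ Gᶜ = ⋃ n, K n := by
    obtain ⟨U, hU, rfl⟩ := isGδ_iff_eq_iInter_nat.1 hG
    exact ⟨fun n ↦ (U n)ᶜ, fun n ↦ (hU n).isClosed_compl, compl_iInter U⟩
  have hcond (x) (hx : x ∈ ⋃ n, K n) : IsCondensationPt x (⋃ n, K n) :=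
    hGK ▸ h.isCondensationPt (hGK ▸ hx)
  obtain ⟨Ps, hPs, hPsK, hcover⟩ := exists_countable_closed_cover_isCondensationPt hK hcond
  have := hPs.to_subtype
  obtain ⟨r, hrpos, hr⟩ := exists_pos_tendsto_cofinite_zero Ps
  obtain ⟨H, hH, hHP⟩ := exists_injective_forall_mem
    (fun d : Demand ((↑) : Ps → Set ℝ) ↦ d.level.1 ∩ Ioo d.lo d.hi) (mk_demand_le _)
    fun d ↦ d.continuum_le
  rw [show (2 : Cardinal) ^ 𝔠 = #(Set ℝ) by simp [mk_real]]
  refine stronglyAlgebrable_of_forall_aeval_mem (zero_notMem_continuityClass h.1)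
    (generator r H) fun n Q hQ hQ0 ξ hξ ↦ aeval_generator_mem hH hHP (fun S ↦ (hPsK S S.2).1)
      (fun S ↦ hGK ▸ (hPsK S S.2).2) (fun x hx ↦ ?_) hrpos hr hQ hQ0 hξ
  obtain ⟨S, hS, hxS⟩ := hcover x (hGK ▸ hx)
  exact ⟨⟨S, hS⟩, hxS⟩

end ContinuityClass

/-- For a `Gδ` set `G ⊆ ℝ`, the following are equivalent: (i) `C_G` is strongly
`2 ^ 𝔠`-algebrable in `ℝ^ℝ`; (ii) `C_G` is `𝔠⁺`-lineable; (iii) `ℝ \ G` is `𝔠`-dense in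
itself. -/
theorem stmt17 (G : Set ℝ) (hG : IsGδ G) :
    (StronglyAlgebrable ℝ (ContinuityClass G) ((2 : Cardinal) ^ Cardinal.continuum) ↔
      CDenseInItself Gᶜ) ∧
    (Lineable (ContinuityClass G) (Order.succ Cardinal.continuum) ↔
      CDenseInItself Gᶜ) := by
  have hiii_i := ContinuityClass.stronglyAlgebrable hG
  have hi_ii (h : StronglyAlgebrable ℝ (ContinuityClass G) (2 ^ 𝔠)) :=
    h.lineable (Order.succ_le_of_lt (cantor 𝔠))
  have hii_iii := cDenseInItself_compl_of_lineable hG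
  exact ⟨⟨fun h ↦ hii_iii (hi_ii h), hiii_i⟩, ⟨hii_iii, fun h ↦ hi_ii (hiii_i h)⟩⟩
end

section
/- Let G ⊆ ℝ be a Gδ set such that ℝ \ G is not 𝔠-dense in itself, and let C_G be the set of all functions f : ℝ → ℝ whose set of continuity points {x ∈ ℝ : f is continuous at x} equals G. Then C_G is 𝔠-lineable, i.e. C_G ∪ {0} contains a linear subspace of ℝ^ℝ of dimension 𝔠. -/
/-!
Write `ℝ \ G = ⋃ n, C n` with `C n` closed. We build `Q : ℝ → ℝ`, continuous at every point of
`G`, such that every `x ∉ G` is a limit of points where `Q` takes the value `2⁻ⁱ`, for all large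
`i`. `Q` is a sum of disjointly supported peaks: countable dense subsets of the `C n` serve as
bases, and each base `w` carries, for every `j`, peaks of height `2^-(level w + j + 1)` closer and
closer to `w`. Near an accumulation point of `ℝ \ G` a peak is a single point of `ℝ \ G`; beside an
isolated point it is a continuous tent inside `G`. Peaks close to a point of `G` belong to bases
of high level, hence are low, and this gives continuity on `G`.

The functions `exp (exp b * Q)`, `b ∈ ℝ`, then span the required space. A nontrivial combination
is `E ∘ Q` with `E s = ∑ c_b exp (exp b * s)`, which is real-analytic and, by Dedekind's
independence of characters, not constant. If `E ∘ Q` were continuous at some `x ∉ G`, then `E`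
would equal `E (Q x)` at the values `2⁻ⁱ`, which accumulate at `0`, so `E` would be constant.
-/

open Cardinal

open Filter Topology Set Function Metric

noncomputable section

def expMulMonoidHom (a : ℝ) : Multiplicative ℝ →* ℝ where
  toFun s := Real.exp (a * s.toAdd)
  map_one' := by simp
  map_mul' s t := by simp [mul_add, Real.exp_add]

theorem linearIndependent_exp_mul :
    LinearIndependent ℝ (fun (a s : ℝ) => Real.exp (a * s)) :=
  (linearIndependent_monoidHom (Multiplicative ℝ) ℝ).comp expMulMonoidHom fun a b h => by
    simpa [expMulMonoidHom] using congr($h (Multiplicative.ofAdd 1))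

def expExpMul (b s : ℝ) : ℝ := Real.exp (Real.exp b * s)

theorem analyticOnNhd_linearCombination_expExpMul (c : ℝ →₀ ℝ) :
    AnalyticOnNhd ℝ (Finsupp.linearCombination ℝ expExpMul c) univ := by
  rw [Finsupp.linearCombination_apply]
  exact Finset.analyticOnNhd_sum _ fun b _ s _ =>
    analyticAt_const.smul (analyticAt_const.mul analyticAt_id).rexp

theorem eq_zero_of_linearCombination_expExpMul_eq_const {c : ℝ →₀ ℝ} {C : ℝ}
    (h : Finsupp.linearCombination ℝ expExpMul c = fun _ => C) : c = 0 := by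
  have hv := linearIndependent_exp_mul
  by_cases hC : C = 0
  · exact linearIndependent_iff.1 (hv.comp Real.exp Real.exp_injective) c
      (h.trans (by rw [hC]; rfl))
  · -- the constant `C` is a multiple of `exp (0 * s)`, and `0` is not a rate `exp b`
    refine absurd ?_ (hv.notMem_span_image (s := range Real.exp) (x := 0)
      fun ⟨b, hb⟩ => (Real.exp_pos b).ne' hb)
    have h1 : (fun s : ℝ => Real.exp (0 * s)) = C⁻¹ • Finsupp.linearCombination ℝ expExpMul c := by
      ext s; simp [h, hC]
    rw [h1, ← range_comp, ← Finsupp.range_linearCombination]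
    exact Submodule.smul_mem _ _ (LinearMap.mem_range_self _ c)

theorem eq_zero_of_frequently_linearCombination_expExpMul_eq {c : ℝ →₀ ℝ} {a C : ℝ}
    (h : ∃ᶠ y in 𝓝[≠] a, Finsupp.linearCombination ℝ expExpMul c y = C) : c = 0 :=
  eq_zero_of_linearCombination_expExpMul_eq_const <| funext fun s =>
    (analyticOnNhd_linearCombination_expExpMul c).eqOn_of_preconnected_of_frequently_eq
      analyticOnNhd_const isPreconnected_univ (mem_univ a) h (mem_univ s)

theorem ContinuousAt.eq_of_mem_closure_preimage_singleton {X Y : Type*} [TopologicalSpace X]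
    [TopologicalSpace Y] [T1Space Y] {g : X → Y} {x : X} {y : Y} (hg : ContinuousAt g x)
    (hx : x ∈ closure (g ⁻¹' {y})) : g x = y := by
  simpa using
    closure_mono (image_preimage_subset g {y}) (hg.continuousWithinAt.mem_closure_image hx)

theorem linearCombination_comp_expExpMul (Q : ℝ → ℝ) (c : ℝ →₀ ℝ) :
    Finsupp.linearCombination ℝ (fun b => expExpMul b ∘ Q) c =
      Finsupp.linearCombination ℝ expExpMul c ∘ Q :=
  (Finsupp.apply_linearCombination ℝ (LinearMap.funLeft ℝ ℝ Q) expExpMul c).symm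

theorem linearIndependent_comp_expExpMul {Q : ℝ → ℝ}
    (hrange : ∃ a, ∃ᶠ y in 𝓝[≠] a, y ∈ range Q) :
    LinearIndependent ℝ fun b => expExpMul b ∘ Q := by
  refine linearIndependent_iff.2 fun c hc => ?_
  obtain ⟨a, ha⟩ := hrange
  refine eq_zero_of_frequently_linearCombination_expExpMul_eq (C := 0) (ha.mono ?_)
  rintro _ ⟨z, rfl⟩
  exact congr_fun ((linearCombination_comp_expExpMul Q c).symm.trans hc) z

theorem linearCombination_expExpMul_comp_mem_continuityClass {G : Set ℝ} {Q : ℝ → ℝ}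
    (hcont : ∀ x ∈ G, ContinuousAt Q x)
    (hdisc : ∀ x ∉ G, ∃ a, ∃ᶠ y in 𝓝[≠] a, x ∈ closure (Q ⁻¹' {y}))
    {c : ℝ →₀ ℝ} (hc : c ≠ 0) :
    Finsupp.linearCombination ℝ expExpMul c ∘ Q ∈ ContinuityClass G := by
  set E := Finsupp.linearCombination ℝ expExpMul c
  ext x
  refine ⟨fun hx => not_not.1 fun hxG => ?_, fun hx =>
    ((analyticOnNhd_linearCombination_expExpMul c _ (mem_univ _)).continuousAt).comp (hcont x hx)⟩
  obtain ⟨a, ha⟩ := hdisc x hxG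
  refine hc (eq_zero_of_frequently_linearCombination_expExpMul_eq (C := E (Q x))
    (ha.mono fun y hy => ?_))
  exact (ContinuousAt.eq_of_mem_closure_preimage_singleton hx
    (closure_mono (fun z (hz : Q z = y) => congrArg E hz) hy)).symm

theorem lineable_continuityClass_of_accumulating_values {G : Set ℝ} {Q : ℝ → ℝ}
    (hcont : ∀ x ∈ G, ContinuousAt Q x)
    (hdisc : ∀ x ∉ G, ∃ a, ∃ᶠ y in 𝓝[≠] a, x ∈ closure (Q ⁻¹' {y}))
    (hrange : ∃ a, ∃ᶠ y in 𝓝[≠] a, y ∈ range Q) :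
    Lineable (ContinuityClass G) 𝔠 := by
  have hindep := linearIndependent_comp_expExpMul hrange
  refine ⟨Submodule.span ℝ (range fun b => expExpMul b ∘ Q), ?_, fun g hg => ?_⟩
  · rw [rank_span hindep, mk_range_eq _ hindep.injective, mk_real]
  rw [SetLike.mem_coe, ← Finsupp.range_linearCombination] at hg
  obtain ⟨c, rfl⟩ := hg
  rw [linearCombination_comp_expExpMul]
  rcases eq_or_ne c 0 with rfl | hc
  · right; simp
  · exact .inl (linearCombination_expExpMul_comp_mem_continuityClass hcont hdisc hc)

theorem continuousAt_tsum_of_pairwise_disjoint_support {ι X : Type*} [PseudoMetricSpace X]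
    {g : ι → X → ℝ} {c : ι → X} {r : ι → ℝ} {x : X}
    (hdisj : Pairwise (Disjoint on fun i => support (g i)))
    (hsupp : ∀ i, support (g i) ⊆ closedBall (c i) (r i))
    (hr : Tendsto r cofinite (𝓝 0))
    (hcont : ∀ i, ContinuousAt (g i) x)
    (hsmall : ∀ ε > 0, ∃ δ > 0, ∀ i, dist (c i) x < δ → ∀ z, |g i z| < ε) :
    ContinuousAt (fun z => ∑' i, g i z) x := by
  refine continuousAt_of_locally_uniform_approx_of_continuousAt fun u hu => ?_
  obtain ⟨ε, hε, hεu⟩ := mem_uniformity_dist.1 hu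
  obtain ⟨δ, hδ, hsmallδ⟩ := hsmall ε hε
  have hfin : {i | ¬ r i < δ / 2}.Finite :=
    eventually_cofinite.1 (hr.eventually (gt_mem_nhds (half_pos hδ)))
  refine ⟨ball x (δ / 2), ball_mem_nhds x (half_pos hδ), fun z => ∑ i ∈ hfin.toFinset, g i z,
    tendsto_finsetSum _ fun i _ => hcont i, fun z hz => hεu ?_⟩
  change dist (∑' i, g i z) (∑ i ∈ hfin.toFinset, g i z) < ε
  by_cases h : ∃ i₀, g i₀ z ≠ 0
  · obtain ⟨i₀, hi₀⟩ := h
    have hother : ∀ i ≠ i₀, g i z = 0 := fun i hi =>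
      not_not.1 fun hiz => disjoint_left.1 (hdisj hi) (mem_support.2 hiz) (mem_support.2 hi₀)
    rw [tsum_eq_single i₀ hother]
    by_cases hs : i₀ ∈ hfin.toFinset
    · rw [Finset.sum_eq_single_of_mem i₀ hs fun i _ hi => hother i hi, dist_self]
      exact hε
    · rw [Finset.sum_eq_zero fun i hi => hother i (ne_of_mem_of_not_mem hi hs), dist_zero_right,
        Real.norm_eq_abs]
      have hr₀ : r i₀ < δ / 2 := by simpa using hs
      refine hsmallδ i₀ ?_ z
      calc dist (c i₀) x ≤ dist z (c i₀) + dist z x := dist_triangle_left _ _ _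
        _ < δ / 2 + δ / 2 := add_lt_add_of_le_of_lt
            ((mem_closedBall.1 (hsupp i₀ (mem_support.2 hi₀))).trans hr₀.le) (mem_ball.1 hz)
        _ = δ := add_halves δ
  · push Not at h
    simpa [h] using hε

theorem exists_injective_forall_mem_of_infinite {ι α : Type*} [Countable ι] {s : ι → Set α}
    (hs : ∀ i, (s i).Infinite) : ∃ f : ι → α, Injective f ∧ ∀ i, f i ∈ s i := by
  classical
  -- Hall's condition holds for finite subsets `t i ⊆ s i` of size `e i + 1`, with `e` injective.
  obtain ⟨e, he⟩ := Countable.exists_injective_nat ι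
  choose t hts hcard using fun i => (hs i).exists_subset_card_eq (e i + 1)
  obtain ⟨f, hf, hft⟩ := (Finset.all_card_le_biUnion_card_iff_exists_injective t).1 fun S => by
    rcases S.eq_empty_or_nonempty with rfl | hS
    · simp
    obtain ⟨i, hi, hmax⟩ := S.exists_max_image e hS
    calc S.card = (S.image e).card := (Finset.card_image_of_injective S he).symm
      _ ≤ (Finset.range (e i + 1)).card :=
          Finset.card_le_card fun n hn => by
            obtain ⟨j, hj, rfl⟩ := Finset.mem_image.1 hn
            exact Finset.mem_range.2 (Nat.lt_succ_of_le (hmax j hj))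
      _ = (t i).card := by rw [Finset.card_range, hcard]
      _ ≤ (S.biUnion t).card := Finset.card_le_card (Finset.subset_biUnion_of_mem t hi)
  exact ⟨f, hf, fun i => hts i (hft i)⟩

def level (C : ℕ → Set ℝ) (y : ℝ) : ℕ := sInf {n | y ∈ C n}

theorem level_le {C : ℕ → Set ℝ} {y : ℝ} {n : ℕ} (h : y ∈ C n) : level C y ≤ n :=
  Nat.sInf_le h

theorem mem_level {C : ℕ → Set ℝ} {y : ℝ} (h : y ∈ ⋃ n, C n) : y ∈ C (level C y) :=
  Nat.sInf_mem (mem_iUnion.1 h)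

theorem eventually_lt_level {C : ℕ → Set ℝ} (hC : ∀ n, IsClosed (C n)) {x : ℝ}
    (hx : x ∉ ⋃ n, C n) (N : ℕ) : ∀ᶠ y in 𝓝 x, y ∈ ⋃ n, C n → N < level C y := by
  have hF : IsClosed (⋃ n ≤ N, C n) := (finite_le_nat N).isClosed_biUnion fun n _ => hC n
  have hxF : x ∉ ⋃ n ≤ N, C n := fun h => hx (iUnion₂_subset (fun n _ => subset_iUnion C n) h)
  filter_upwards [hF.isOpen_compl.mem_nhds hxF] with y hy hyD
  by_contra h
  exact hy (mem_biUnion (not_lt.1 h) (mem_level hyD))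

def tent (c h v z : ℝ) : ℝ := v * max 0 (1 - |z - c| / h)

theorem continuous_tent (c h v : ℝ) : Continuous (tent c h v) := by
  unfold tent; fun_prop

theorem tent_self (c h v : ℝ) : tent c h v c = v := by simp [tent]

theorem abs_tent_le {c h v : ℝ} (hh : 0 ≤ h) (hv : 0 ≤ v) (z : ℝ) : |tent c h v z| ≤ v := by
  have h1 : max 0 (1 - |z - c| / h) ≤ 1 := max_le zero_le_one (by
    have := div_nonneg (abs_nonneg (z - c)) hh; linarith)
  rw [tent, abs_of_nonneg (mul_nonneg hv (le_max_left _ _))]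
  exact mul_le_of_le_one_right hv h1

theorem support_tent_subset {c h : ℝ} (hh : 0 < h) (v : ℝ) : support (tent c h v) ⊆ ball c h := by
  intro z hz
  have : 0 < 1 - |z - c| / h := by
    by_contra hle
    exact hz (by simp [tent, max_eq_left (not_lt.1 hle)])
  rw [mem_ball, Real.dist_eq]
  rwa [sub_pos, div_lt_one hh] at this

/-- Where the peaks of the oscillating function sit. A task `(w, j, k)` asks for a peak of height
`2^-(level C w + j + 1)` within `2^-(code (w, j, k))` of the base `w`: at the `carrier`, a point of
`⋃ n, C n`, if `w` is an accumulation point of that set; otherwise on a tent inside the gap to the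
right of the isolated point `w`. -/
structure PeakData (C : ℕ → Set ℝ) where
  bases : Set ℝ
  bases_subset : bases ⊆ ⋃ n, C n
  subset_closure_bases : ∀ n, C n ⊆ closure {w ∈ bases | level C w ≤ n}
  code : bases × ℕ × ℕ → ℕ
  code_injective : Injective code
  gap : ℝ → ℝ
  gap_pos : ∀ w, 0 < gap w
  gap_le_one : ∀ w, gap w ≤ 1
  two_mul_gap_le : ∀ w, ¬AccPt w (𝓟 (⋃ n, C n)) → ∀ y ∈ ⋃ n, C n, y ≠ w → 2 * gap w ≤ dist y w
  carrier : bases × ℕ × ℕ → ℝ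
  carrier_injective : Injective carrier
  carrier_mem : ∀ t, AccPt (t.1 : ℝ) (𝓟 (⋃ n, C n)) → carrier t ∈ ⋃ n, C n
  dist_carrier_lt : ∀ t, AccPt (t.1 : ℝ) (𝓟 (⋃ n, C n)) → dist (carrier t) t.1 < (1 / 2) ^ code t

namespace PeakData

variable {C : ℕ → Set ℝ} (S : PeakData C)

abbrev Task : Type := S.bases × ℕ × ℕ

def radius (t : S.Task) : ℝ := (1 / 2) ^ S.code t

def height (t : S.Task) : ℝ := (1 / 2) ^ (level C t.1 + t.2.1 + 1)

open Classical in
def peak (t : S.Task) : ℝ :=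
  if AccPt (t.1 : ℝ) (𝓟 (⋃ n, C n)) then S.carrier t else t.1 + 3 / 4 * S.gap t.1 * S.radius t

open Classical in
def piece (t : S.Task) : ℝ → ℝ :=
  if AccPt (t.1 : ℝ) (𝓟 (⋃ n, C n)) then ({S.carrier t} : Set ℝ).indicator fun _ => S.height t
  else tent (S.peak t) (S.gap t.1 * S.radius t / 4) (S.height t)

def oscillating (z : ℝ) : ℝ := ∑' t, S.piece t z

theorem radius_pos (t : S.Task) : 0 < S.radius t := by unfold radius; positivity

theorem radius_le_one (t : S.Task) : S.radius t ≤ 1 :=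
  pow_le_one₀ (by norm_num) (by norm_num)

theorem height_pos (t : S.Task) : 0 < S.height t := by unfold height; positivity

theorem support_piece_of_accPt {t : S.Task} (ht : AccPt (t.1 : ℝ) (𝓟 (⋃ n, C n))) :
    support (S.piece t) ⊆ {S.carrier t} := by
  rw [piece, if_pos ht]
  exact support_indicator_subset

theorem support_piece_of_not_accPt {t : S.Task}
    (ht : ¬AccPt (t.1 : ℝ) (𝓟 (⋃ n, C n))) :
    support (S.piece t) ⊆
      Ioo (t.1 + S.gap t.1 * S.radius t / 2) (t.1 + S.gap t.1 * S.radius t) := by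
  have hr := mul_pos (S.gap_pos t.1) (S.radius_pos t)
  rw [piece, if_neg ht, peak, if_neg ht]
  refine (support_tent_subset (by positivity) _).trans (fun z hz => ?_)
  rw [Real.ball_eq_Ioo] at hz
  constructor <;> linarith [hz.1, hz.2]

theorem notMem_of_mem_support_piece {t : S.Task}
    (ht : ¬AccPt (t.1 : ℝ) (𝓟 (⋃ n, C n))) {z : ℝ} (hz : z ∈ support (S.piece t)) :
    z ∉ ⋃ n, C n := fun hzD => by
  obtain ⟨h1, h2⟩ := S.support_piece_of_not_accPt ht hz
  have hr := mul_pos (S.gap_pos t.1) (S.radius_pos t)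
  have := S.two_mul_gap_le t.1 ht z hzD (by intro h; linarith)
  rw [Real.dist_eq, abs_of_pos (by linarith)] at this
  nlinarith [S.radius_le_one t, S.gap_pos t.1]

theorem dist_peak_lt (t : S.Task) : dist (S.peak t) t.1 < S.radius t := by
  unfold peak
  split_ifs with ht
  · exact S.dist_carrier_lt t ht
  · have hr := S.radius_pos t
    rw [Real.dist_eq, add_sub_cancel_left, abs_of_pos (by have := S.gap_pos t.1; positivity)]
    nlinarith [S.gap_le_one t.1]

theorem support_piece_subset (t : S.Task) :
    support (S.piece t) ⊆ closedBall t.1 (S.radius t) := by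
  by_cases ht : AccPt (t.1 : ℝ) (𝓟 (⋃ n, C n))
  · refine (S.support_piece_of_accPt ht).trans (singleton_subset_iff.2 ?_)
    exact (mem_ball.1 (S.dist_carrier_lt t ht)).le
  · intro z hz
    obtain ⟨h1, h2⟩ := S.support_piece_of_not_accPt ht hz
    have hr := mul_pos (S.gap_pos t.1) (S.radius_pos t)
    rw [mem_closedBall, Real.dist_eq, abs_of_pos (by linarith)]
    nlinarith [S.gap_le_one t.1, S.radius_pos t]

theorem piece_peak (t : S.Task) : S.piece t (S.peak t) = S.height t := by
  unfold piece
  split_ifs with ht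
  · simp [peak, if_pos ht]
  · exact tent_self _ _ _

theorem abs_piece_le (t : S.Task) (z : ℝ) : |S.piece t z| ≤ S.height t := by
  unfold piece
  split_ifs
  · rw [indicator]; split_ifs
    · exact (abs_of_pos (S.height_pos t)).le
    · simpa using (S.height_pos t).le
  · exact abs_tent_le (by have := S.gap_pos t.1; have := S.radius_pos t; positivity)
      (S.height_pos t).le z

theorem continuousAt_piece (t : S.Task) {x : ℝ} (hx : x ∉ ⋃ n, C n) :
    ContinuousAt (S.piece t) x := by
  unfold piece
  split_ifs with ht
  · have hne : x ≠ S.carrier t := fun h => hx (h ▸ S.carrier_mem t ht)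
    exact (continuousAt_const (y := (0 : ℝ))).congr
      ((eventually_ne_nhds hne).mono fun z hz => by simp [hz])
  · exact (continuous_tent _ _ _).continuousAt

theorem radius_le_half_or_le_half {t t' : S.Task} (h : S.code t ≠ S.code t') :
    S.radius t' ≤ S.radius t / 2 ∨ S.radius t ≤ S.radius t' / 2 := by
  have key {m n : ℕ} (hmn : m < n) : (1 / 2 : ℝ) ^ n ≤ (1 / 2) ^ m / 2 := by
    calc (1 / 2 : ℝ) ^ n ≤ (1 / 2) ^ (m + 1) := pow_le_pow_of_le_one (by norm_num) (by norm_num) hmn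
      _ = (1 / 2) ^ m / 2 := by ring
  rcases lt_or_gt_of_ne h with h | h
  exacts [.inl (key h), .inr (key h)]

theorem disjoint_support_piece_of_not_accPt {t t' : S.Task} (hne : t ≠ t')
    (ht : ¬AccPt (t.1 : ℝ) (𝓟 (⋃ n, C n))) (ht' : ¬AccPt (t'.1 : ℝ) (𝓟 (⋃ n, C n))) :
    Disjoint (support (S.piece t)) (support (S.piece t')) := by
  refine disjoint_left.2 fun z hz hz' => ?_
  obtain ⟨h1, h2⟩ := S.support_piece_of_not_accPt ht hz
  obtain ⟨h1', h2'⟩ := S.support_piece_of_not_accPt ht' hz'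
  have hρ := S.gap_pos t.1
  have hρ' := S.gap_pos t'.1
  have hr := S.radius_pos t
  have hr' := S.radius_pos t'
  by_cases hw : (t.1 : ℝ) = t'.1
  · -- the same isolated base: the two tents sit in disjoint dyadic intervals
    have hcode : S.code t ≠ S.code t' := fun h => hne (S.code_injective h)
    rw [← hw] at h1' h2'
    rcases S.radius_le_half_or_le_half hcode with h | h <;> nlinarith
  · have hd := S.two_mul_gap_le t.1 ht t'.1 (S.bases_subset t'.1.2) (Ne.symm hw)
    have hd' := S.two_mul_gap_le t'.1 ht' t.1 (S.bases_subset t.1.2) hw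
    rw [Real.dist_eq] at hd hd'
    have := S.gap_le_one t.1
    have := S.gap_le_one t'.1
    have := S.radius_le_one t
    have := S.radius_le_one t'
    cases abs_cases ((t'.1 : ℝ) - t.1) <;> cases abs_cases ((t.1 : ℝ) - t'.1) <;> nlinarith

theorem pairwise_disjoint_support_piece :
    Pairwise (Disjoint on fun t => support (S.piece t)) := by
  intro t t' hne
  by_cases ht : AccPt (t.1 : ℝ) (𝓟 (⋃ n, C n)) <;> by_cases ht' : AccPt (t'.1 : ℝ) (𝓟 (⋃ n, C n))
  · exact (disjoint_singleton.2 fun h => hne (S.carrier_injective h)).mono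
      (S.support_piece_of_accPt ht) (S.support_piece_of_accPt ht')
  · exact disjoint_left.2 fun z hz hz' =>
      S.notMem_of_mem_support_piece ht' hz' (S.support_piece_of_accPt ht hz ▸ S.carrier_mem t ht)
  · exact disjoint_left.2 fun z hz hz' =>
      S.notMem_of_mem_support_piece ht hz (S.support_piece_of_accPt ht' hz' ▸ S.carrier_mem t' ht')
  · exact S.disjoint_support_piece_of_not_accPt hne ht ht'

theorem oscillating_peak (t : S.Task) : S.oscillating (S.peak t) = S.height t := by
  rw [oscillating, tsum_eq_single t fun t' hne => ?_, piece_peak]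
  have hmem : S.peak t ∈ support (S.piece t) := by
    rw [mem_support, piece_peak]; exact (S.height_pos t).ne'
  exact notMem_support.1 fun h => disjoint_left.1 (S.pairwise_disjoint_support_piece hne) h hmem

theorem tendsto_radius : Tendsto S.radius cofinite (𝓝 0) :=
  (tendsto_pow_atTop_nhds_zero_of_lt_one (by norm_num) (by norm_num)).comp
    (Nat.cofinite_eq_atTop ▸ S.code_injective.tendsto_cofinite)

theorem continuousAt_oscillating (hC : ∀ n, IsClosed (C n)) {x : ℝ} (hx : x ∉ ⋃ n, C n) :
    ContinuousAt S.oscillating x := by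
  refine continuousAt_tsum_of_pairwise_disjoint_support S.pairwise_disjoint_support_piece
    S.support_piece_subset S.tendsto_radius (fun t => S.continuousAt_piece t hx) fun ε hε => ?_
  obtain ⟨N, hN⟩ := exists_pow_lt_of_lt_one hε (by norm_num : (1 / 2 : ℝ) < 1)
  obtain ⟨δ, hδ, hlevel⟩ := Metric.eventually_nhds_iff.1 (eventually_lt_level hC hx N)
  refine ⟨δ, hδ, fun t ht z => (S.abs_piece_le t z).trans_lt (lt_of_le_of_lt ?_ hN)⟩
  exact pow_le_pow_of_le_one (by norm_num) (by norm_num)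
    (by have := hlevel ht (S.bases_subset t.1.2); omega)

theorem base_mem_closure_oscillating_preimage (w : S.bases) (j : ℕ) :
    (w : ℝ) ∈ closure (S.oscillating ⁻¹' {(1 / 2) ^ (level C w + j + 1)}) := by
  have hcode : Tendsto (fun k => S.code (w, j, k)) atTop atTop := by
    rw [← Nat.cofinite_eq_atTop]
    exact (S.code_injective.comp fun k k' h => by simpa using h).tendsto_cofinite
  have hpeak : Tendsto (fun k => S.peak (w, j, k)) atTop (𝓝 w) :=
    tendsto_iff_dist_tendsto_zero.2 <| squeeze_zero (fun _ => dist_nonneg)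
      (fun k => (S.dist_peak_lt (w, j, k)).le)
      ((tendsto_pow_atTop_nhds_zero_of_lt_one (by norm_num) (by norm_num)).comp hcode)
  exact mem_closure_of_tendsto hpeak (Eventually.of_forall fun k => S.oscillating_peak (w, j, k))

theorem mem_closure_oscillating_preimage {x : ℝ} (hx : x ∈ ⋃ n, C n) {i : ℕ}
    (hi : level C x < i) : x ∈ closure (S.oscillating ⁻¹' {(1 / 2) ^ i}) := by
  refine closure_minimal (fun w (hw : w ∈ S.bases ∧ level C w ≤ level C x) => ?_) isClosed_closure
    (S.subset_closure_bases _ (mem_level hx))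
  obtain ⟨j, rfl⟩ : ∃ j, i = level C w + j + 1 := ⟨i - level C w - 1, by omega⟩
  exact S.base_mem_closure_oscillating_preimage ⟨w, hw.1⟩ j

theorem frequently_mem_closure_oscillating_preimage {x : ℝ} (hx : x ∈ ⋃ n, C n) :
    ∃ᶠ y in 𝓝[≠] 0, x ∈ closure (S.oscillating ⁻¹' {y}) := by
  have hpow : Tendsto (fun i : ℕ => (1 / 2 : ℝ) ^ i) atTop (𝓝[≠] 0) :=
    tendsto_nhdsWithin_of_tendsto_nhds_of_eventually_within _
      (tendsto_pow_atTop_nhds_zero_of_lt_one (by norm_num) (by norm_num))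
      (Eventually.of_forall fun i => pow_ne_zero i (by norm_num))
  exact hpow.frequently ((eventually_gt_atTop (level C x)).mono
    fun i hi => S.mem_closure_oscillating_preimage hx hi).frequently

end PeakData

theorem PeakData.nonempty (C : ℕ → Set ℝ) : Nonempty (PeakData C) := by
  classical
  choose B hBC hBc hCB using fun n =>
    (TopologicalSpace.IsSeparable.of_separableSpace (C n)).exists_countable_dense_subset
  have : Countable ((⋃ n, B n : Set ℝ) × ℕ × ℕ) := by
    have := (countable_iUnion hBc).to_subtype; infer_instance
  obtain ⟨code, hcode⟩ := Countable.exists_injective_nat ((⋃ n, B n : Set ℝ) × ℕ × ℕ)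
  have hgap (w : ℝ) : ∃ ρ, 0 < ρ ∧ ρ ≤ 1 ∧
      (¬AccPt w (𝓟 (⋃ n, C n)) → ∀ y ∈ ⋃ n, C n, y ≠ w → 2 * ρ ≤ dist y w) := by
    by_cases hw : AccPt w (𝓟 (⋃ n, C n))
    · exact ⟨1, one_pos, le_rfl, absurd hw⟩
    rw [accPt_iff_nhds] at hw
    push Not at hw
    obtain ⟨U, hU, hUw⟩ := hw
    obtain ⟨ε, hε, hball⟩ := Metric.mem_nhds_iff.1 hU
    refine ⟨min 1 (ε / 2), by positivity, min_le_left _ _, fun _ y hy hyw => ?_⟩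
    have : ε ≤ dist y w := not_lt.1 fun h => hyw (hUw y ⟨hball h, hy⟩)
    linarith [min_le_right 1 (ε / 2)]
  choose ρ hρpos hρle hρ using hgap
  obtain ⟨p, hp, hpmem⟩ := exists_injective_forall_mem_of_infinite
    (s := fun t : (⋃ n, B n : Set ℝ) × ℕ × ℕ => if AccPt (t.1 : ℝ) (𝓟 (⋃ n, C n))
      then ball (t.1 : ℝ) ((1 / 2) ^ code t) ∩ ⋃ n, C n else univ) fun t => by
    split_ifs with h
    · exact Infinite.of_accPt (h.nhds_inter (ball_mem_nhds _ (by positivity)))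
    · exact infinite_univ
  have hpD (t) (ht : AccPt (t.1 : ℝ) (𝓟 (⋃ n, C n))) :
      p t ∈ ball (t.1 : ℝ) ((1 / 2) ^ code t) ∩ ⋃ n, C n := by
    simpa only [if_pos ht] using hpmem t
  exact ⟨{
    bases := ⋃ n, B n
    bases_subset := iUnion_mono fun n => hBC n
    subset_closure_bases := fun n => (hCB n).trans
      (closure_mono fun w hw => ⟨mem_iUnion_of_mem n hw, level_le (hBC n hw)⟩)
    code := code
    code_injective := hcode
    gap := ρ
    gap_pos := hρpos
    gap_le_one := hρle
    two_mul_gap_le := hρ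
    carrier := p
    carrier_injective := hp
    carrier_mem := fun t ht => (hpD t ht).2
    dist_carrier_lt := fun t ht => (hpD t ht).1 }⟩

end

theorem stmt18_general (G : Set ℝ) (hG : IsGδ G) :
    Lineable (ContinuityClass G) Cardinal.continuum := by
  obtain ⟨U, hU, rfl⟩ := hG.eq_iInter_nat
  rw [show ⋂ n, U n = (⋃ n, (U n)ᶜ)ᶜ by simp only [compl_iUnion, compl_compl]]
  rcases (⋃ n, (U n)ᶜ).eq_empty_or_nonempty with hD | ⟨x₀, hx₀⟩
  · rw [hD, compl_empty]
    exact lineable_continuityClass_of_accumulating_values (Q := id)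
      (fun x _ => continuousAt_id) (by simp) ⟨0, .of_forall fun y => mem_range_self y⟩
  obtain ⟨S⟩ := PeakData.nonempty fun n => (U n)ᶜ
  refine lineable_continuityClass_of_accumulating_values
    (fun x hx => S.continuousAt_oscillating (fun n => (hU n).isClosed_compl) hx)
    (fun x hx => ⟨0, S.frequently_mem_closure_oscillating_preimage (not_not.1 hx)⟩)
    ⟨0, (S.frequently_mem_closure_oscillating_preimage hx₀).mono fun y hy => ?_⟩
  exact closure_nonempty_iff.1 ⟨x₀, hy⟩

/-- If `G ⊆ ℝ` is a `Gδ` set such that `ℝ \ G` is not `𝔠`-dense in itself,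
then `C_G` is `𝔠`-lineable. -/
theorem stmt18 (G : Set ℝ) (hG : IsGδ G) (h : ¬ CDenseInItself Gᶜ) :
    Lineable (ContinuityClass G) Cardinal.continuum :=
  stmt18_general G hG
end

section
/- The set of all functions f : ℝ → ℝ such that f is continuous at no point of ℝ, f maps every connected subset of ℝ onto a connected set (f is Darboux), and f maps every uncountable compact subset of ℝ onto a compact set, is strongly 2^𝔠-algebrable in the algebra ℝ^ℝ, where 𝔠 is the cardinality of the continuum. -/
/-!
For `X ⊆ ℝ`, the function `f_X` reads off, from a code attached to each point, the value in
`[0, 1]` that the code prescribes for the trace of `X` on a finite set. There are only `𝔠` codes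
and `𝔠` uncountable compact sets, each of size `𝔠`, so a transfinite (Bernstein-type)
construction attaches codes to points so that every code occurs on every uncountable compact set.
Distinct sets `X₁, …, Xₙ` already have distinct traces on some finite set, hence
`(f_{X₁}, …, f_{Xₙ})` maps every uncountable compact set onto the cube `[0, 1]ⁿ`, and
`P(f_{X₁}, …, f_{Xₙ})` maps each of them onto the same compact interval `P([0, 1]ⁿ)`. That interval
is nondegenerate when `P ≠ 0` has no constant term, and a function with this property is nowhere
continuous and Darboux.
-/

open Cardinal

open Set Function MvPolynomial

universe u

theorem exists_injective_forall_mem_s19 {J α : Type u} (S : J → Set α) (hS : ∀ j, #J ≤ #(S j)) :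
    ∃ h : J → α, Injective h ∧ ∀ j, h j ∈ S j := by
  -- Along the initial well-order of type `#J`, each stage has fewer than `#J` points to avoid.
  obtain ⟨e⟩ : Nonempty ((#J).ord.ToType ≃ J) := Cardinal.eq.1 (mk_ord_toType _)
  have fresh : ∀ (o : (#J).ord.ToType) (prev : Iio o → α), (S (e o) \ range prev).Nonempty := by
    intro o prev
    refine nonempty_of_not_subset fun hsub => ?_
    have hlt : #(Iio o) < #J := by simpa using mk_Iio_lt o
    exact (((hS _).trans (mk_le_mk_of_subset hsub)).trans mk_range_le).not_gt hlt
  let F : (#J).ord.ToType → α :=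
    IsWellFounded.fix (· < ·) fun o ih => (fresh o fun p => ih p.1 p.2).some
  have hF : ∀ o, F o ∈ S (e o) \ range fun p : Iio o => F p.1 := fun o => by
    rw [show F o = _ from IsWellFounded.fix_eq _ _ o]
    exact (fresh o _).some_mem
  have hFinj : Injective F := by
    intro a b hab
    by_contra hne
    rcases lt_or_gt_of_ne hne with h | h
    · exact (hF b).2 ⟨⟨a, h⟩, hab⟩
    · exact (hF a).2 ⟨⟨b, h⟩, hab.symm⟩
  exact ⟨F ∘ e.symm, hFinj.comp e.symm.injective, fun j => by simpa using (hF (e.symm j)).1⟩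

theorem exists_forall_surjOn {α D : Type u} [Nonempty D] (𝒦 : Set (Set α))
    (h𝒦 : ∀ K ∈ 𝒦, #(𝒦 × D) ≤ #K) : ∃ ψ : α → D, ∀ K ∈ 𝒦, SurjOn ψ K univ := by
  obtain ⟨h, hinj, hmem⟩ := exists_injective_forall_mem_s19 (fun j : 𝒦 × D => (j.1 : Set α))
    fun j => h𝒦 _ j.1.2
  refine ⟨extend h Prod.snd fun _ => Classical.arbitrary D, fun K hK d _ => ?_⟩
  exact ⟨h (⟨K, hK⟩, d), hmem (⟨K, hK⟩, d), hinj.extend_apply _ _ _⟩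

theorem continuum_le_mk_of_isClosed_of_not_countable {α : Type u} [TopologicalSpace α]
    [PolishSpace α] {C : Set α} (hC : IsClosed C) (hunc : ¬C.Countable) : 𝔠 ≤ #C := by
  obtain ⟨f, hfC, -, hinj⟩ := hC.exists_nat_bool_injection_of_not_countable hunc
  have := lift_mk_le_lift_mk_of_injective (β := C) (f := fun x => ⟨f x, hfC ⟨x, rfl⟩⟩)
    fun a b hab => hinj (congrArg Subtype.val hab)
  simpa using this

theorem mk_measurableSet_real_le : #{s : Set ℝ | MeasurableSet s} ≤ 𝔠 := by
  have hgen : #(⋃ (a : ℚ) (b : ℚ) (_ : a < b), {Ioo (a : ℝ) (b : ℝ)}) ≤ 𝔠 :=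
    ((countable_iUnion fun _ => countable_iUnion fun _ => countable_iUnion fun _ =>
      countable_singleton _).le_aleph0).trans aleph0_le_continuum
  have := MeasurableSpace.cardinal_measurableSet_le_continuum hgen
  rwa [← Real.borel_eq_generateFrom_Ioo_rat, ← BorelSpace.measurable_eq] at this

theorem MvPolynomial.aeval_pi_apply_s19 {σ : Type*} (F : σ → ℝ → ℝ) (P : MvPolynomial σ ℝ) (x : ℝ) :
    aeval F P x = eval (fun i => F i x) P := by
  rw [← coe_aeval_eq_eval]
  exact comp_aeval_apply F (Pi.evalAlgHom ℝ (fun _ => ℝ) x) P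

theorem MvPolynomial.nontrivial_image_eval_cube {σ : Type*} {P : MvPolynomial σ ℝ} (hP : P ≠ 0)
    (h0 : constantCoeff P = 0) : ((fun w => eval w P) '' univ.pi fun _ => Icc 0 1).Nontrivial := by
  by_contra hsub
  rw [not_nontrivial_iff] at hsub
  refine hP (funext_set (fun _ => Icc 0 1) (fun _ => Icc_infinite zero_lt_one) fun w hw => ?_)
  have hzero : (0 : σ → ℝ) ∈ univ.pi fun _ => Icc (0 : ℝ) 1 := fun _ _ => ⟨le_rfl, zero_le_one⟩
  rw [map_zero, ← h0, ← eval_zero]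
  exact hsub (mem_image_of_mem _ hw) (mem_image_of_mem _ hzero)

section UncountableCompactImage

variable {g : ℝ → ℝ} {T : Set ℝ}
  (hg : ∀ K : Set ℝ, IsCompact K → ¬K.Countable → g '' K = T)
include hg

theorem image_Icc_eq_of_forall_image_eq {a b : ℝ} (hab : a < b) : g '' Icc a b = T :=
  hg _ isCompact_Icc (by simpa using hab)

theorem range_subset_of_forall_image_eq : range g ⊆ T := by
  rintro _ ⟨x, rfl⟩
  rw [← image_Icc_eq_of_forall_image_eq hg (lt_add_one x)]
  exact mem_image_of_mem g ⟨le_rfl, by linarith⟩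

theorem ne_zero_of_forall_image_eq (hT : T.Nontrivial) : g ≠ 0 := by
  rintro rfl
  refine hT.not_subset_singleton (x := 0) ?_
  rw [← image_Icc_eq_of_forall_image_eq hg zero_lt_one]
  rintro _ ⟨x, -, rfl⟩
  rfl

theorem not_continuousAt_of_forall_image_eq (hT : T.Nontrivial) (x : ℝ) : ¬ContinuousAt g x := by
  intro hc
  refine hT.not_subset_singleton (x := g x) ?_
  rw [← ker_nhds (g x)]
  intro y hy
  refine Filter.mem_ker.2 fun V hV => ?_
  obtain ⟨u, hxu, hsub⟩ := exists_Ico_subset_of_mem_nhds (hc hV) ⟨x + 1, lt_add_one x⟩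
  obtain ⟨c, hxc, hcu⟩ := exists_between hxu
  rw [← image_Icc_eq_of_forall_image_eq hg hxc] at hy
  obtain ⟨z, hz, rfl⟩ := hy
  exact hsub (Icc_subset_Ico_right hcu hz)

theorem isPreconnected_image_of_forall_image_eq (hT : IsPreconnected T) {C : Set ℝ}
    (hC : IsPreconnected C) : IsPreconnected (g '' C) := by
  rcases C.subsingleton_or_nontrivial with hsub | hnt
  · exact (hsub.image g).isPreconnected
  obtain ⟨a, ha, b, hb, hab⟩ := hnt.exists_lt
  suffices g '' C = T by rwa [this]
  refine (image_subset_range g C).trans (range_subset_of_forall_image_eq hg) |>.antisymm ?_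
  rw [← image_Icc_eq_of_forall_image_eq hg hab]
  exact image_mono (hC.Icc_subset ha hb)

end UncountableCompactImage

namespace NowhereContinuousDarboux

def Code (α β : Type*) : Type _ := Σ s : Finset α, (Set s → β)

namespace Code

variable {α β : Type*}

def eval (X : Set α) (c : Code α β) : β := c.2 {r | (r : α) ∈ X}

theorem exists_eval_eq {ι : Type*} [Finite ι] [Nonempty β] {ξ : ι → Set α} (hξ : Injective ξ)
    (v : ι → β) : ∃ c : Code α β, ∀ i, c.eval (ξ i) = v i := by
  have hsep : ∀ p : {p : ι × ι // p.1 ≠ p.2}, ∃ r, ¬(r ∈ ξ p.1.1 ↔ r ∈ ξ p.1.2) := fun p => by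
    by_contra! h
    exact p.2 (hξ (Set.ext h))
  choose sep hsep using hsep
  let s := (finite_range sep).toFinset
  let τ : ι → Set s := fun i => {r | (r : α) ∈ ξ i}
  have hτ : Injective τ := by
    intro i j hij
    by_contra hne
    have hr : sep ⟨(i, j), hne⟩ ∈ s := by simp [s]
    exact hsep ⟨(i, j), hne⟩ (by simpa [τ] using Set.ext_iff.1 hij ⟨_, hr⟩)
  let fallback : Set s → β := fun _ => Classical.arbitrary β
  exact ⟨⟨s, extend τ v fallback⟩, fun i => hτ.extend_apply v fallback i⟩

instance [Nonempty β] : Nonempty (Code α β) := ⟨⟨∅, fun _ => Classical.arbitrary β⟩⟩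

end Code

theorem mk_code_real_le : #(Code ℝ unitInterval) ≤ 𝔠 := by
  have hfib : ∀ s : Finset ℝ, #(Set s → unitInterval) ≤ 𝔠 := fun s => by
    calc #(Set s → unitInterval) ≤ #(Set s → ℝ) :=
          mk_le_of_injective Subtype.val_injective.comp_left
      _ ≤ 𝔠 := by
          rw [← power_def, mk_real, mk_fintype]
          exact power_nat_le aleph0_le_continuum
  calc #(Code ℝ unitInterval) = sum fun s : Finset ℝ => #(Set s → unitInterval) := mk_sigma _
    _ ≤ sum fun _ : Finset ℝ => 𝔠 := sum_le_sum _ _ hfib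
    _ = 𝔠 := by rw [sum_const', mk_finset_of_infinite, mk_real, continuum_mul_self]

theorem exists_code_surjOn : ∃ ψ : ℝ → Code ℝ unitInterval,
    ∀ K : Set ℝ, IsCompact K → ¬K.Countable → SurjOn ψ K univ := by
  let 𝒦 : Set (Set ℝ) := {K | IsCompact K ∧ ¬K.Countable}
  have h𝒦 : #𝒦 ≤ 𝔠 := (mk_le_mk_of_subset fun K hK => hK.1.isClosed.measurableSet).trans
    mk_measurableSet_real_le
  obtain ⟨ψ, hψ⟩ := exists_forall_surjOn 𝒦 fun K hK =>
    calc #(𝒦 × Code ℝ unitInterval) = #𝒦 * #(Code ℝ unitInterval) := by simp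
      _ ≤ 𝔠 * 𝔠 := mul_le_mul' h𝒦 mk_code_real_le
      _ = 𝔠 := continuum_mul_self
      _ ≤ #K := continuum_le_mk_of_isClosed_of_not_countable hK.1.isClosed hK.2
  exact ⟨ψ, fun K hK hKc => hψ K ⟨hK, hKc⟩⟩

noncomputable def code : ℝ → Code ℝ unitInterval := exists_code_surjOn.choose

noncomputable def family (X : Set ℝ) (x : ℝ) : ℝ := ((code x).eval X : unitInterval)

theorem image_family_eq_cube {ι : Type*} [Finite ι] {ξ : ι → Set ℝ} (hξ : Injective ξ)
    {K : Set ℝ} (hK : IsCompact K) (hKc : ¬K.Countable) :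
    (fun x i => family (ξ i) x) '' K = univ.pi fun _ => Icc 0 1 := by
  refine subset_antisymm ?_ fun w hw => ?_
  · rintro _ ⟨x, -, rfl⟩ i -
    exact ((code x).eval (ξ i)).2
  obtain ⟨c, hc⟩ := Code.exists_eval_eq hξ fun i => (⟨w i, hw i trivial⟩ : unitInterval)
  obtain ⟨x, hxK, hx⟩ := exists_code_surjOn.choose_spec K hK hKc (mem_univ c)
  refine ⟨x, hxK, funext fun i => ?_⟩
  simp only [family, code, hx, hc]

theorem image_aeval_family_eq {σ : Type*} [Finite σ] (P : MvPolynomial σ ℝ) {ξ : σ → Set ℝ}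
    (hξ : Injective ξ) {K : Set ℝ} (hK : IsCompact K) (hKc : ¬K.Countable) :
    aeval (fun i => family (ξ i)) P '' K = (fun w => eval w P) '' univ.pi fun _ => Icc 0 1 := by
  rw [← image_family_eq_cube hξ hK hKc, image_image]
  simp only [aeval_pi_apply_s19]

theorem aeval_family_mem {σ : Type*} [Finite σ] {P : MvPolynomial σ ℝ} (hP : P ≠ 0)
    (h0 : constantCoeff P = 0) {ξ : σ → Set ℝ} (hξ : Injective ξ) :
    aeval (fun i => family (ξ i)) P ≠ 0 ∧ aeval (fun i => family (ξ i)) P ∈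
      {f : ℝ → ℝ | (∀ x : ℝ, ¬ContinuousAt f x) ∧
        (∀ C : Set ℝ, IsPreconnected C → IsPreconnected (f '' C)) ∧
        ∀ K : Set ℝ, IsCompact K → ¬ K.Countable → IsCompact (f '' K)} := by
  have hg := fun K hK hKc => image_aeval_family_eq P hξ (K := K) hK hKc
  have hT := nontrivial_image_eval_cube hP h0
  refine ⟨ne_zero_of_forall_image_eq hg hT, not_continuousAt_of_forall_image_eq hg hT,
    fun C hC => isPreconnected_image_of_forall_image_eq hg ?_ hC, fun K hK hKc => ?_⟩
  · exact (isPreconnected_univ_pi fun _ => isPreconnected_Icc).image _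
      (continuous_eval P).continuousOn
  · rw [hg K hK hKc]
    exact (isCompact_univ_pi fun _ => isCompact_Icc).image (continuous_eval P)

theorem family_injective : Injective family := by
  intro X Y hXY
  by_contra hne
  let ξ : Bool → Set ℝ := fun b => bif b then X else Y
  have hξ : Injective ξ := by
    intro a b
    cases a <;> cases b <;> simp [ξ, hne, Ne.symm hne]
  have hw : (fun b : Bool => bif b then (1 : ℝ) else 0) ∈ univ.pi fun _ => Icc (0 : ℝ) 1 := by
    intro b _
    cases b <;> simp
  rw [← image_family_eq_cube hξ isCompact_Icc (by simp : ¬(Icc (0 : ℝ) 1).Countable)] at hw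
  obtain ⟨x, -, hx⟩ := hw
  have h1 := congrFun hx true
  have h0 := congrFun hx false
  simp only [ξ, cond_true, cond_false, hXY] at h1 h0
  exact one_ne_zero (h1.symm.trans h0)

end NowhereContinuousDarboux

/-- The set of nowhere continuous Darboux functions `f : ℝ → ℝ` which map
every uncountable compact set onto a compact set is strongly `2 ^ 𝔠`-algebrable in `ℝ^ℝ`. -/
theorem stmt19 :
    StronglyAlgebrable ℝ
      {f : ℝ → ℝ | (∀ x : ℝ, ¬ContinuousAt f x) ∧
        (∀ C : Set ℝ, IsPreconnected C → IsPreconnected (f '' C)) ∧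
        ∀ K : Set ℝ, IsCompact K → ¬ K.Countable → IsCompact (f '' K)}
      ((2 : Cardinal) ^ Cardinal.continuum) := by
  open NowhereContinuousDarboux in
  exact ⟨Set ℝ, family, by rw [mk_set, mk_real], family_injective,
    fun X => by simpa using (aeval_family_mem (X_ne_zero ()) (constantCoeff_X ℝ ())
      (injective_of_subsingleton fun _ : Unit => X)).2,
    fun _ _ _ hP h0 _ hξ => aeval_family_mem hP h0 hξ⟩
end
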